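/- arXiv:2202.02305 — 9 statements merged into one kernel-verified Lean document; each statement's English description precedes it below -/
import Mathlib

section
/- Let G=(V,E) be a finite simple undirected graph and x∈{0,1}^E. Then x is the incidence vector of the edge cut δ(U) for some U⊆V if and only if x satisfies all cycle inequalities, i.e., for every simple cycle C of G and every F⊆C with |F| odd one has Σ_{e∈F} x(e) − Σ_{e∈C∖F} x(e) ≤ |F|−1. Equivalently, x∈{0,1}^E is the incidence vector of a cut if and only if every simple cycle C of G contains an even number of edges e with x(e)=1. -/
variable {V : Type*}

/-- `e` is an edge of `G` that crosses the cut induced by the vertex set `U`,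
i.e. `e ∈ δ(U) := {{u,v} ∈ E : u ∈ U, v ∉ U}`. -/
def inCutSet (G : SimpleGraph V) (U : Set V) (e : Sym2 V) : Prop :=
  e ∈ G.edgeSet ∧ (∃ u ∈ e, u ∈ U) ∧ ∃ v ∈ e, v ∉ U

/-- `C` is the edge set of a simple cycle of `G`. -/
def IsSimpleCycleEdgeSet [DecidableEq V] (G : SimpleGraph V) (C : Finset (Sym2 V)) : Prop :=
  ∃ (v : V) (p : G.Walk v v), p.IsCycle ∧ C = p.edges.toFinset

/-!
Let `c : Sym2 V → ZMod 2` be the indicator of `{e | x e = 1}`. Then `x` is the cut of `{f = 1}`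
exactly when `c s(u, v) = f u + f v` on every edge, and then every closed walk has `c`-sum
`f v + f v = 0`. Conversely, if every cycle has `c`-sum `0`, so does every closed walk: shortcutting
a walk (`Walk.bypass`) only removes closed pieces made of an edge followed by a path, i.e. cycles
or an edge traversed back and forth. So the `c`-sum of a walk depends only on its endpoints, and
`f v` can be read off a walk from a fixed root of the component of `v` to `v`.
On a single cycle `C` the cycle inequalities amount to parity: for odd `F ⊆ C` the inequality can
only fail when `x = 1` exactly on `F`.
-/

open Finset

lemma ZMod.two_eq_iff {a b : ZMod 2} : a = b ↔ (a = 1 ↔ b = 1) := by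
  revert a b; decide

lemma ZMod.two_add_eq_one_iff {a b : ZMod 2} : a + b = 1 ↔ ¬(a = 1 ↔ b = 1) := by
  revert a b; decide

namespace Finset

variable {α : Type*}

lemma sum_eq_card_filter_eq_one {s : Finset α} {x : α → ℚ}
    (hx : ∀ e ∈ s, x e = 0 ∨ x e = 1) :
    ∑ e ∈ s, x e = #(s.filter (x · = 1)) := by
  rw [← sum_boole]
  refine sum_congr rfl fun e he => ?_
  rcases hx e he with h | h <;> simp [h]

lemma forall_odd_card_sum_sub_sum_sdiff_le_iff_even [DecidableEq α] {C : Finset α}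
    {x : α → ℚ} (hx : ∀ e ∈ C, x e = 0 ∨ x e = 1) :
    (∀ F ⊆ C, Odd #F → ∑ e ∈ F, x e - ∑ e ∈ C \ F, x e ≤ #F - 1) ↔
      Even #(C.filter (x · = 1)) := by
  have hsum : ∀ F ⊆ C, ∑ e ∈ F, x e = #(F.filter (x · = 1)) := fun F hF =>
    sum_eq_card_filter_eq_one fun e he => hx e (hF he)
  constructor
  · intro h
    by_contra hodd
    set S := C.filter (x · = 1)
    have hS : S.filter (x · = 1) = S := filter_true_of_mem fun e he => (mem_filter.mp he).2
    have hrest : (C \ S).filter (x · = 1) = ∅ := filter_eq_empty_iff.mpr fun e he hxe =>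
      (mem_sdiff.mp he).2 (mem_filter.mpr ⟨(mem_sdiff.mp he).1, hxe⟩)
    have := h S (filter_subset _ C) (Nat.not_even_iff_odd.mp hodd)
    rw [hsum S (filter_subset _ C), hsum _ sdiff_subset, hS, hrest, card_empty] at this
    norm_num at this
  · intro heven F hF hodd
    rw [hsum F hF, hsum _ sdiff_subset]
    set a := #(F.filter (x · = 1))
    set b := #((C \ F).filter (x · = 1))
    have hab : a + b = #(C.filter (x · = 1)) := by
      rw [← card_union_of_disjoint (disjoint_filter_filter disjoint_sdiff), ← filter_union,
        union_sdiff_of_subset hF]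
    have haF : a ≤ #F := card_filter_le _ _
    have : a + 1 ≤ #F + b := by
      obtain ⟨k, hk⟩ := heven
      obtain ⟨m, hm⟩ := hodd
      omega
    have : (a : ℚ) + 1 ≤ #F + b := by exact_mod_cast this
    linarith

end Finset

namespace SimpleGraph

variable {G : SimpleGraph V} (c : Sym2 V → ZMod 2)

namespace Walk

def edgeSum {u v : V} (p : G.Walk u v) : ZMod 2 := (p.edges.map c).sum

@[simp] lemma edgeSum_nil {u : V} : (nil : G.Walk u u).edgeSum c = 0 := rfl

@[simp] lemma edgeSum_cons {u v w : V} (h : G.Adj u v) (p : G.Walk v w) :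
    (cons h p).edgeSum c = c s(u, v) + p.edgeSum c := by
  simp [edgeSum]

@[simp] lemma edgeSum_append {u v w : V} (p : G.Walk u v) (q : G.Walk v w) :
    (p.append q).edgeSum c = p.edgeSum c + q.edgeSum c := by
  simp [edgeSum]

@[simp] lemma edgeSum_reverse {u v : V} (p : G.Walk u v) :
    p.reverse.edgeSum c = p.edgeSum c := by
  simp [edgeSum, List.sum_reverse]

@[simp] lemma edgeSum_concat {u v w : V} (p : G.Walk u v) (h : G.Adj v w) :
    (p.concat h).edgeSum c = p.edgeSum c + c s(v, w) := by
  simp [edgeSum, edges_concat]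

variable {c}

lemma edgeSum_eq_add_of_forall_adj {f : V → ZMod 2}
    (hf : ∀ u v, G.Adj u v → c s(u, v) = f u + f v) {u v : V} (p : G.Walk u v) :
    p.edgeSum c = f u + f v := by
  induction p with
  | nil => exact (CharTwo.add_self_eq_zero _).symm
  | @cons u v w h p ih =>
    rw [edgeSum_cons, ih, hf _ _ h, add_assoc, ← add_assoc (f v), CharTwo.add_self_eq_zero,
      zero_add]

lemma edgeSum_cons_eq_zero_of_isPath
    (hcyc : ∀ (v : V) (p : G.Walk v v), p.IsCycle → p.edgeSum c = 0)
    {u v : V} (h : G.Adj u v) {q : G.Walk v u} (hq : q.IsPath) : (cons h q).edgeSum c = 0 := by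
  by_cases he : s(u, v) ∈ q.edges
  · rw [hq.eq_adj_toWalk_of_mem_edges (Sym2.eq_swap ▸ he)]
    simp [Sym2.eq_swap, CharTwo.add_self_eq_zero]
  · exact hcyc u _ ((cons_isCycle_iff q h).mpr ⟨hq, he⟩)

lemma edgeSum_bypass [DecidableEq V]
    (hcyc : ∀ (v : V) (p : G.Walk v v), p.IsCycle → p.edgeSum c = 0) {u v : V}
    (p : G.Walk u v) :
    p.bypass.edgeSum c = p.edgeSum c := by
  induction p with
  | nil => rfl
  | @cons u v w h p ih =>
    rw [bypass]
    split_ifs with hs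
    · have hsplit := congrArg (edgeSum c) (p.bypass.take_spec hs)
      rw [edgeSum_append] at hsplit
      rw [edgeSum_cons, ← ih, ← hsplit, ← add_assoc, ← edgeSum_cons c h,
        edgeSum_cons_eq_zero_of_isPath hcyc h ((bypass_isPath p).takeUntil hs), zero_add]
    · rw [edgeSum_cons, edgeSum_cons, ih]

lemma edgeSum_eq_zero_of_forall_isCycle
    (hcyc : ∀ (v : V) (p : G.Walk v v), p.IsCycle → p.edgeSum c = 0) {u : V} (p : G.Walk u u) :
    p.edgeSum c = 0 := by
  classical
  rw [← edgeSum_bypass hcyc, (isPath_iff_nil.mp (bypass_isPath p)).eq_nil, edgeSum_nil]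

lemma edgeSum_eq_of_forall_isCycle
    (hcyc : ∀ (v : V) (p : G.Walk v v), p.IsCycle → p.edgeSum c = 0) {u v : V}
    (p q : G.Walk u v) : p.edgeSum c = q.edgeSum c := by
  have := edgeSum_eq_zero_of_forall_isCycle hcyc (p.append q.reverse)
  rwa [edgeSum_append, edgeSum_reverse, CharTwo.add_eq_zero] at this

end Walk

theorem forall_isCycle_edgeSum_eq_zero_iff :
    (∀ (v : V) (p : G.Walk v v), p.IsCycle → p.edgeSum c = 0) ↔
      ∃ f : V → ZMod 2, ∀ u v, G.Adj u v → c s(u, v) = f u + f v := by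
  constructor
  · intro hcyc
    let root : V → V := fun v => (G.connectedComponentMk v).out
    have hroot : ∀ v, G.Reachable (root v) v := fun v => ConnectedComponent.exact (Quot.out_eq _)
    set f : V → ZMod 2 := fun v => (hroot v).some.edgeSum c
    have hf : ∀ {r v : V} (p : G.Walk r v), root v = r → f v = p.edgeSum c := by
      rintro r v p rfl
      exact Walk.edgeSum_eq_of_forall_isCycle hcyc _ _
    refine ⟨f, fun u v h => ?_⟩
    have hrv : root v = root u := by
      simp only [root, ConnectedComponent.connectedComponentMk_eq_of_adj h.symm]
    rw [hf (hroot u).some rfl, hf ((hroot u).some.concat h) hrv, Walk.edgeSum_concat,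
      ← add_assoc, CharTwo.add_self_eq_zero, zero_add]
  · rintro ⟨f, hf⟩ v p -
    rw [Walk.edgeSum_eq_add_of_forall_adj hf, CharTwo.add_self_eq_zero]

def oneIndicator (x : Sym2 V → ℚ) (e : Sym2 V) : ZMod 2 := if x e = 1 then 1 else 0

lemma oneIndicator_eq_one_iff {x : Sym2 V → ℚ} {e : Sym2 V} :
    oneIndicator x e = 1 ↔ x e = 1 := by
  unfold oneIndicator
  split_ifs with h <;> simp [h]

lemma inCutSet_mk_iff {U : Set V} {u v : V} (h : G.Adj u v) :
    inCutSet G U s(u, v) ↔ ¬(u ∈ U ↔ v ∈ U) := by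
  simp only [inCutSet, mem_edgeSet, h, true_and, Sym2.mem_iff, exists_eq_or_imp, exists_eq_left]
  tauto

lemma exists_cut_iff_exists_potential (x : Sym2 V → ℚ) :
    (∃ U : Set V, ∀ e ∈ G.edgeSet, (x e = 1 ↔ inCutSet G U e)) ↔
      ∃ f : V → ZMod 2, ∀ u v, G.Adj u v → oneIndicator x s(u, v) = f u + f v := by
  classical
  have key (U : Set V) (f : V → ZMod 2) (hf : ∀ v, f v = 1 ↔ v ∈ U) :
      (∀ e ∈ G.edgeSet, (x e = 1 ↔ inCutSet G U e)) ↔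
        ∀ u v, G.Adj u v → oneIndicator x s(u, v) = f u + f v := by
    simp only [Sym2.forall, mem_edgeSet]
    refine forall₂_congr fun u v => imp_congr_right fun h => ?_
    rw [inCutSet_mk_iff h, ZMod.two_eq_iff, oneIndicator_eq_one_iff, ZMod.two_add_eq_one_iff,
      hf, hf]
  constructor
  · rintro ⟨U, hU⟩
    refine ⟨fun v => if v ∈ U then 1 else 0, (key U _ fun v => ?_).mp hU⟩
    split_ifs with hv <;> simp [hv]
  · rintro ⟨f, hf⟩
    exact ⟨{v | f v = 1}, (key _ f fun v => Iff.rfl).mpr hf⟩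

lemma IsSimpleCycleEdgeSet.subset_edgeSet [DecidableEq V] {C : Finset (Sym2 V)}
    (hC : IsSimpleCycleEdgeSet G C) : ∀ e ∈ C, e ∈ G.edgeSet := by
  obtain ⟨v, p, -, rfl⟩ := hC
  exact fun e he => p.edges_subset_edgeSet (List.mem_toFinset.mp he)

lemma Walk.IsTrail.edgeSum_oneIndicator [DecidableEq V] {x : Sym2 V → ℚ} {u v : V}
    {p : G.Walk u v} (hp : p.IsTrail) :
    p.edgeSum (oneIndicator x) = #(p.edges.toFinset.filter (x · = 1)) := by
  rw [edgeSum, ← List.sum_toFinset _ hp.edges_nodup, ← Finset.sum_boole]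
  rfl

lemma forall_isSimpleCycleEdgeSet_even_iff [DecidableEq V] (x : Sym2 V → ℚ) :
    (∀ C : Finset (Sym2 V), IsSimpleCycleEdgeSet G C → Even #(C.filter (x · = 1))) ↔
      ∀ (v : V) (p : G.Walk v v), p.IsCycle → p.edgeSum (oneIndicator x) = 0 := by
  constructor
  · intro h v p hp
    rw [hp.isTrail.edgeSum_oneIndicator, ZMod.natCast_eq_zero_iff_even]
    exact h _ ⟨v, p, hp, rfl⟩
  · rintro h C ⟨v, p, hp, rfl⟩
    rw [← ZMod.natCast_eq_zero_iff_even, ← hp.isTrail.edgeSum_oneIndicator]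
    exact h v p hp

end SimpleGraph

open SimpleGraph in
theorem stmt2_general [DecidableEq V] (G : SimpleGraph V)
    (x : Sym2 V → ℚ) (hx01 : ∀ e ∈ G.edgeSet, x e = 0 ∨ x e = 1) :
    ((∃ U : Set V, ∀ e ∈ G.edgeSet, (x e = 1 ↔ inCutSet G U e)) ↔
      (∀ (C F : Finset (Sym2 V)), IsSimpleCycleEdgeSet G C → F ⊆ C → Odd F.card →
        (∑ e ∈ F, x e) - (∑ e ∈ C \ F, x e) ≤ (F.card : ℚ) - 1)) ∧
    ((∃ U : Set V, ∀ e ∈ G.edgeSet, (x e = 1 ↔ inCutSet G U e)) ↔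
      (∀ C : Finset (Sym2 V), IsSimpleCycleEdgeSet G C →
        Even (C.filter (fun e => x e = 1)).card)) := by
  have hcut : (∃ U : Set V, ∀ e ∈ G.edgeSet, (x e = 1 ↔ inCutSet G U e)) ↔
      ∀ C : Finset (Sym2 V), IsSimpleCycleEdgeSet G C → Even #(C.filter (x · = 1)) := by
    rw [exists_cut_iff_exists_potential, ← forall_isCycle_edgeSum_eq_zero_iff,
      forall_isSimpleCycleEdgeSet_even_iff]
  refine ⟨hcut.trans (forall_congr' fun C => ?_), hcut⟩
  have hineq (hC : IsSimpleCycleEdgeSet G C) :=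
    forall_odd_card_sum_sub_sum_sdiff_le_iff_even fun e he => hx01 e (hC.subset_edgeSet e he)
  exact ⟨fun h F hC => (hineq hC).mpr (h hC) F, fun h hC => (hineq hC).mp fun F => h F hC⟩

/-- A `{0,1}`-valued vector `x` on the edges of `G` is the incidence vector of an edge cut
`δ(U)` if and only if it satisfies all cycle inequalities on simple cycles; equivalently,
if and only if every simple cycle contains an even number of edges `e` with `x(e) = 1`. -/
theorem stmt2 [Fintype V] [DecidableEq V] (G : SimpleGraph V)
    (x : Sym2 V → ℚ) (hx01 : ∀ e ∈ G.edgeSet, x e = 0 ∨ x e = 1) :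
    ((∃ U : Set V, ∀ e ∈ G.edgeSet, (x e = 1 ↔ inCutSet G U e)) ↔
      (∀ (C F : Finset (Sym2 V)), IsSimpleCycleEdgeSet G C → F ⊆ C → Odd F.card →
        (∑ e ∈ F, x e) - (∑ e ∈ C \ F, x e) ≤ (F.card : ℚ) - 1)) ∧
    ((∃ U : Set V, ∀ e ∈ G.edgeSet, (x e = 1 ↔ inCutSet G U e)) ↔
      (∀ C : Finset (Sym2 V), IsSimpleCycleEdgeSet G C →
        Even (C.filter (fun e => x e = 1)).card)) :=
  stmt2_general G x hx01
end

section
/- (Proposition 1) Let G=(V,E) be a finite simple undirected graph with edge weights w:E→ℚ, let e∈E with w(e)≠0, and let U⊂V be such that e∈δ(U). If |w(e)| ≥ Σ_{a∈δ(U)∖{e}} |w(a)|, then there exists an optimal solution x∈{0,1}^E of the maximum-cut instance (G,w) with x(e)=β, where β=1 if w(e)>0 and β=0 if w(e)<0. -/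
variable {V : Type*}

/-- The edge cut `δ(U)` as a finset. -/
noncomputable def cutFinset [Fintype V] (G : SimpleGraph V) (U : Set V) :
    Finset (Sym2 V) := by
  classical
  exact Finset.univ.filter (inCutSet G U)

/-- The weight `w(δ(U))` of the cut induced by `U`. -/
noncomputable def cutWeight [Fintype V] (G : SimpleGraph V) (w : Sym2 V → ℚ) (U : Set V) : ℚ :=
  ∑ e ∈ cutFinset G U, w e

/-!
Flipping a cut `δ(W)` by `U` gives the cut `δ(W ∆ U) = δ(W) ∆ δ(U)`, whose weight differs from
that of `δ(W)` by `∑_{a ∈ δ(U)} ± w(a)`, with sign `-` exactly on the edges of `δ(W)`. If `e` has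
the wrong status in a maximum cut `δ(W)`, its term is `+|w(e)|`, which by hypothesis outweighs
all the other terms; so `δ(W ∆ U)` is again a maximum cut, and `e` has the right status in it.
-/

def IsMaxCut [Fintype V] (G : SimpleGraph V) (w : Sym2 V → ℚ) (W : Set V) : Prop :=
  ∀ S : Set V, cutWeight G w S ≤ cutWeight G w W

lemma exists_isMaxCut [Fintype V] (G : SimpleGraph V) (w : Sym2 V → ℚ) :
    ∃ W, IsMaxCut G w W :=
  Finite.exists_max (cutWeight G w)

lemma inCutSet_mk_iff {G : SimpleGraph V} {u v : V} (h : G.Adj u v) (W : Set V) :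
    inCutSet G W s(u, v) ↔ Xor (u ∈ W) (v ∈ W) := by
  simp only [inCutSet, SimpleGraph.mem_edgeSet, h, Sym2.mem_iff, exists_eq_or_imp,
    exists_eq_left, true_and, xor_def]
  tauto

lemma inCutSet_symmDiff_iff {G : SimpleGraph V} {e : Sym2 V} (he : e ∈ G.edgeSet) (W U : Set V) :
    inCutSet G (symmDiff W U) e ↔ Xor (inCutSet G W e) (inCutSet G U e) := by
  induction e using Sym2.ind with
  | _ u v =>
    simp only [inCutSet_mk_iff he, Set.mem_symmDiff, xor_def]
    tauto

lemma mem_cutFinset_iff [Fintype V] {G : SimpleGraph V} {U : Set V} {e : Sym2 V} :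
    e ∈ cutFinset G U ↔ inCutSet G U e := by
  simp [cutFinset]

open Classical in
lemma cutWeight_symmDiff [Fintype V] (G : SimpleGraph V) (w : Sym2 V → ℚ) (W U : Set V) :
    cutWeight G w (symmDiff W U) =
      cutWeight G w W + ∑ a ∈ cutFinset G U, if inCutSet G W a then -w a else w a := by
  simp only [cutWeight, cutFinset, Finset.sum_filter, ← Finset.sum_add_distrib]
  refine Finset.sum_congr rfl fun a _ => ?_
  by_cases ha : a ∈ G.edgeSet
  · by_cases hW : inCutSet G W a <;> by_cases hU : inCutSet G U a <;>
      simp [inCutSet_symmDiff_iff ha, hW, hU]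
  · have (S : Set V) : ¬ inCutSet G S a := fun h => ha h.1
    simp [this]

lemma cutWeight_le_cutWeight_symmDiff [Fintype V] [DecidableEq V] {G : SimpleGraph V}
    {w : Sym2 V → ℚ} {e : Sym2 V} {W U : Set V} (heU : inCutSet G U e)
    (hbound : ∑ a ∈ (cutFinset G U).erase e, |w a| ≤ |w e|)
    (hcut : inCutSet G W e → w e ≤ 0) (huncut : ¬ inCutSet G W e → 0 ≤ w e) :
    cutWeight G w W ≤ cutWeight G w (symmDiff W U) := by
  classical
  rw [cutWeight_symmDiff, ← Finset.add_sum_erase _ _ (mem_cutFinset_iff.2 heU)]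
  have he_gain : |w e| ≤ if inCutSet G W e then -w e else w e := by
    split_ifs with h
    · exact (abs_of_nonpos (hcut h)).le
    · exact (abs_of_nonneg (huncut h)).le
  have hrest_loss : -∑ a ∈ (cutFinset G U).erase e, |w a| ≤
      ∑ a ∈ (cutFinset G U).erase e, if inCutSet G W a then -w a else w a := by
    rw [← Finset.sum_neg_distrib]
    refine Finset.sum_le_sum fun a _ => ?_
    split_ifs
    · exact neg_le_neg (le_abs_self _)
    · exact neg_abs_le _
  linarith

theorem stmt3_general [Fintype V] [DecidableEq V] (G : SimpleGraph V) (w : Sym2 V → ℚ)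
    (e : Sym2 V) (U : Set V) (heU : inCutSet G U e)
    (hbound : |w e| ≥ ∑ a ∈ (cutFinset G U).erase e, |w a|) :
    ∃ W : Set V, (∀ S : Set V, cutWeight G w S ≤ cutWeight G w W) ∧
      (0 < w e → inCutSet G W e) ∧ (w e < 0 → ¬ inCutSet G W e) := by
  obtain ⟨W, hW⟩ := exists_isMaxCut G w
  by_cases hgood : (0 < w e → inCutSet G W e) ∧ (w e < 0 → ¬ inCutSet G W e)
  · exact ⟨W, hW, hgood⟩
  have hflip : inCutSet G (symmDiff W U) e ↔ ¬ inCutSet G W e := by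
    simp [inCutSet_symmDiff_iff heU.1, heU, xor_def]
  refine ⟨symmDiff W U, fun S => (hW S).trans ?_, ?_⟩
  · apply cutWeight_le_cutWeight_symmDiff heU hbound <;> grind
  · grind

/-- Proposition 1: if `|w(e)| ≥ ∑_{a ∈ δ(U)∖{e}} |w(a)|` for some cut `δ(U)` containing
`e`, then there is an optimal solution of the maximum-cut instance `(G,w)` in which
`e` is a cut edge if `w(e) > 0`, resp. a non-cut edge if `w(e) < 0`. -/
theorem stmt3 [Fintype V] [DecidableEq V] (G : SimpleGraph V) (w : Sym2 V → ℚ)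
    (e : Sym2 V) (he : e ∈ G.edgeSet) (hw : w e ≠ 0)
    (U : Set V) (hU : U ⊂ Set.univ) (heU : inCutSet G U e)
    (hbound : |w e| ≥ ∑ a ∈ (cutFinset G U).erase e, |w a|) :
    ∃ W : Set V, (∀ S : Set V, cutWeight G w S ≤ cutWeight G w W) ∧
      (0 < w e → inCutSet G W e) ∧ (w e < 0 → ¬ inCutSet G W e) :=
  stmt3_general G w e U heU hbound
end

section
/- (Proposition 4) Let G=(V,E) be a finite simple undirected graph with edge weights w:E→ℚ and let u,v∈V be distinct vertices with N(u)∖{v} = N(v)∖{u}, where N denotes the neighborhood. Suppose there is a nonzero α∈ℚ such that w({u,t}) = α·w({v,t}) for every common neighbor t∈N(u)∖{v}, and moreover: if α>0 then {u,v}∉E or w({u,v})<0, and if α<0 then {u,v}∉E or w({u,v})>0. Then there is an optimal vertex assignment y∈{0,1}^V of the maximum-cut instance (G,w) such that y(u)=y(v) if α>0, and y(u)=1−y(v) if α<0. -/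
variable {V : Type*}

/-- The weight of the cut induced by the vertex assignment `y`, i.e.
`∑_{e ∈ E} w(e)·x(e)` where `x` is the cut vector induced by `y`
(`x({u,v}) = 1` iff `y(u) ≠ y(v)`). -/
noncomputable def assignWeight [Fintype V] (G : SimpleGraph V) (w : Sym2 V → ℚ)
    (y : V → Bool) : ℚ := by
  classical
  exact ∑ e ∈ Finset.univ.filter
    (fun e : Sym2 V => e ∈ G.edgeSet ∧ ∃ a ∈ e, ∃ b ∈ e, y a ≠ y b), w e

private lemma cut_pair_iff (y : V → Bool) (a t : V) :
    (∃ p ∈ s(a, t), ∃ q ∈ s(a, t), y p ≠ y q) ↔ y a ≠ y t := by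
  constructor
  · rintro ⟨p, hp, q, hq, h⟩
    rw [Sym2.mem_iff] at hp hq
    rcases hp with rfl | rfl <;> rcases hq with rfl | rfl
    · exact absurd rfl h
    · exact h
    · exact h.symm
    · exact absurd rfl h
  · intro h
    exact ⟨a, Sym2.mem_mk_left a t, t, Sym2.mem_mk_right a t, h⟩

private lemma assignWeight_eq [Fintype V] [DecidableEq V] (G : SimpleGraph V) [DecidableRel G.Adj] (w : Sym2 V → ℚ) (y : V → Bool) :
    assignWeight G w y = ∑ e ∈ G.edgeFinset,
      (if ∃ a ∈ e, ∃ b ∈ e, y a ≠ y b then w e else 0) := by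
  classical
  rw [← Finset.sum_filter]
  unfold assignWeight
  apply Finset.sum_congr _ (fun _ _ => rfl)
  ext e
  simp [SimpleGraph.mem_edgeFinset]

private lemma incident_split [Fintype V] [DecidableEq V] (G : SimpleGraph V) [DecidableRel G.Adj] (a : V) (f : Sym2 V → ℚ) :
    ∑ e ∈ G.edgeFinset, f e
      = (∑ e ∈ G.edgeFinset.filter (fun e => a ∉ e), f e)
        + ∑ t ∈ G.neighborFinset a, f s(a, t) := by
  classical
  rw [← Finset.sum_filter_add_sum_filter_not G.edgeFinset (fun e => a ∉ e) f]
  congr 1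
  have himg : G.edgeFinset.filter (fun e => ¬ a ∉ e) = (G.neighborFinset a).image (fun t => s(a, t)) := by
    ext e
    simp only [Finset.mem_filter, SimpleGraph.mem_edgeFinset, Finset.mem_image,
      SimpleGraph.mem_neighborFinset, not_not]
    constructor
    · rintro ⟨he, ha⟩
      refine ⟨Sym2.Mem.other ha, ?_, Sym2.other_spec ha⟩
      rw [← SimpleGraph.mem_edgeSet, Sym2.other_spec ha]
      exact he
    · rintro ⟨t, hadj, rfl⟩
      exact ⟨hadj, Sym2.mem_mk_left a t⟩
  rw [himg, Finset.sum_image]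
  intro t1 _ t2 _ h
  exact (Sym2.congr_right).1 h

private lemma assignWeight_update [Fintype V] [DecidableEq V] (G : SimpleGraph V) [DecidableRel G.Adj] (w : Sym2 V → ℚ)
    (y : V → Bool) (a : V) (b : Bool) :
    assignWeight G w (Function.update y a b)
      = assignWeight G w y
        + ∑ t ∈ G.neighborFinset a,
            ((if b ≠ y t then w s(a, t) else 0) - (if y a ≠ y t then w s(a, t) else 0)) := by
  classical
  rw [assignWeight_eq, assignWeight_eq,
    incident_split G a (fun e => if ∃ p ∈ e, ∃ q ∈ e, Function.update y a b p ≠ Function.update y a b q then w e else 0),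
    incident_split G a (fun e => if ∃ p ∈ e, ∃ q ∈ e, y p ≠ y q then w e else 0)]
  have h1 : ∀ e ∈ G.edgeFinset.filter (fun e => a ∉ e),
      (if ∃ p ∈ e, ∃ q ∈ e, Function.update y a b p ≠ Function.update y a b q then w e else 0)
        = (if ∃ p ∈ e, ∃ q ∈ e, y p ≠ y q then w e else 0) := by
    intro e he
    rw [Finset.mem_filter] at he
    have key : ∀ p ∈ e, Function.update y a b p = y p := fun p hp =>
      Function.update_of_ne (fun h => he.2 (by rw [← h]; exact hp)) _ _
    refine if_congr ?_ rfl rfl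
    constructor
    · rintro ⟨p, hp, q, hq, h⟩
      exact ⟨p, hp, q, hq, by rwa [key p hp, key q hq] at h⟩
    · rintro ⟨p, hp, q, hq, h⟩
      exact ⟨p, hp, q, hq, by rwa [key p hp, key q hq]⟩
  have h2 : ∀ t ∈ G.neighborFinset a,
      (if ∃ p ∈ s(a, t), ∃ q ∈ s(a, t), Function.update y a b p ≠ Function.update y a b q then w s(a, t) else 0)
        = (if b ≠ y t then w s(a, t) else 0) := by
    intro t ht
    rw [SimpleGraph.mem_neighborFinset] at ht
    have hta : t ≠ a := ht.ne'
    refine if_congr ?_ rfl rfl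
    rw [cut_pair_iff, Function.update_self, Function.update_of_ne hta]
  have h3 : ∀ t ∈ G.neighborFinset a,
      (if ∃ p ∈ s(a, t), ∃ q ∈ s(a, t), y p ≠ y q then w s(a, t) else 0)
        = (if y a ≠ y t then w s(a, t) else 0) := by
    intro t _
    exact if_congr (cut_pair_iff y a t) rfl rfl
  rw [Finset.sum_congr rfl h1, Finset.sum_congr rfl h2, Finset.sum_congr rfl h3,
    Finset.sum_sub_distrib]
  ring

/-- Proposition 4: the symmetry-based reduction. If `u` and `v` have the same
neighborhood (apart from each other), the weights of their incident edges agree up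
to a nonzero factor `α`, and the sign conditions on a possible edge `{u,v}` hold,
then there is an optimal vertex assignment with `y(u) = y(v)` if `α > 0`,
and `y(u) = 1 − y(v)` if `α < 0`. -/
theorem stmt7 [Fintype V] (G : SimpleGraph V) (w : Sym2 V → ℚ)
    (u v : V) (huv : u ≠ v)
    (hN : G.neighborSet u \ {v} = G.neighborSet v \ {u})
    (α : ℚ) (hα0 : α ≠ 0)
    (hw : ∀ t ∈ G.neighborSet u \ {v}, w s(u, t) = α * w s(v, t))
    (hpos : 0 < α → ¬ G.Adj u v ∨ w s(u, v) < 0)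
    (hneg : α < 0 → ¬ G.Adj u v ∨ 0 < w s(u, v)) :
    ∃ y : V → Bool, (∀ z : V → Bool, assignWeight G w z ≤ assignWeight G w y) ∧
      (0 < α → y u = y v) ∧ (α < 0 → y u = !(y v)) := by
  classical
  obtain ⟨y, hy⟩ := Finite.exists_max (assignWeight G w)
  have hNe : (G.neighborFinset u).erase v = (G.neighborFinset v).erase u := by
    ext t
    have ht := Set.ext_iff.mp hN t
    simp only [Set.mem_diff, Set.mem_singleton_iff, SimpleGraph.mem_neighborSet] at ht
    simp only [Finset.mem_erase, SimpleGraph.mem_neighborFinset]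
    tauto
  set C := (G.neighborFinset v).erase u with hCdef
  have hmemC : ∀ t ∈ C, t ∈ G.neighborSet u \ {v} := by
    intro t htC
    rw [← hNe, Finset.mem_erase, SimpleGraph.mem_neighborFinset] at htC
    exact ⟨htC.2, htC.1⟩
  have split_u : ∀ f : V → ℚ, ∑ t ∈ G.neighborFinset u, f t
      = (if G.Adj u v then f v else 0) + ∑ t ∈ C, f t := by
    intro f
    rw [← hNe]
    by_cases h : G.Adj u v
    · rw [if_pos h, Finset.add_sum_erase _ f ((SimpleGraph.mem_neighborFinset _ _ _).2 h)]
    · rw [if_neg h, zero_add, Finset.erase_eq_of_notMem]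
      simp [SimpleGraph.mem_neighborFinset, h]
  have split_v : ∀ f : V → ℚ, ∑ t ∈ G.neighborFinset v, f t
      = (if G.Adj u v then f u else 0) + ∑ t ∈ C, f t := by
    intro f
    by_cases h : G.Adj u v
    · rw [if_pos h, hCdef, Finset.add_sum_erase _ f ((SimpleGraph.mem_neighborFinset _ _ _).2 h.symm)]
    · rw [if_neg h, zero_add, hCdef, Finset.erase_eq_of_notMem]
      simp only [SimpleGraph.mem_neighborFinset]
      exact fun hc => h hc.symm
  set S1 := ∑ t ∈ C, (if y v = y t then w s(v, t) else 0) with hS1def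
  set S2 := ∑ t ∈ C, (if y v ≠ y t then w s(v, t) else 0) with hS2def
  rcases hα0.lt_or_gt with hα | hα
  · -- α < 0
    by_cases heq : y u = !(y v)
    · exact ⟨y, hy, fun h => absurd h (asymm hα), fun _ => heq⟩
    · have heq' : y u = y v := by
        cases h1 : y u <;> cases h2 : y v <;> simp_all
      by_cases hS : S1 ≤ S2
      · -- flip u to !(y v)
        refine ⟨Function.update y u (!(y v)), ?_, fun h => absurd h (asymm hα), fun _ => by
          simp [Function.update_self, Function.update_of_ne (Ne.symm huv)]⟩
        intro z
        refine le_trans (hy z) ?_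
        rw [assignWeight_update, split_u]
        have hA : (0:ℚ) ≤ (if G.Adj u v then
            (if (!(y v)) ≠ y v then w s(u, v) else 0) - (if y u ≠ y v then w s(u, v) else 0)
            else 0) := by
          by_cases hadj : G.Adj u v
          · rw [if_pos hadj, if_pos (Bool.not_ne_self (y v)), if_neg (fun hc => hc heq')]
            rcases hneg hα with h | h
            · exact absurd hadj h
            · linarith
          · rw [if_neg hadj]
        have hB : ∑ t ∈ C,
            ((if (!(y v)) ≠ y t then w s(u, t) else 0) - (if y u ≠ y t then w s(u, t) else 0))
            = α * (S1 - S2) := by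
          rw [hS1def, hS2def, mul_sub, Finset.mul_sum, Finset.mul_sum, ← Finset.sum_sub_distrib]
          apply Finset.sum_congr rfl
          intro t htC
          have hw' := hw t (hmemC t htC)
          by_cases hvt : y v = y t
          · rw [if_pos (hvt ▸ Bool.not_ne_self (y v)), if_neg (fun hc => hc (heq'.trans hvt)),
              if_pos hvt, if_neg (fun hc => hc hvt), hw']
            ring
          · have hx : (!(y v)) = y t := by
              cases h2 : y v <;> cases h3 : y t <;> simp_all
            rw [if_neg (fun hc => hc hx),
              if_pos (fun hc => hvt (heq'.symm.trans hc)), if_neg hvt, if_pos hvt, hw']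
            ring
        rw [hB]
        have : (0:ℚ) ≤ α * (S1 - S2) := by
          nlinarith
        linarith
      · -- flip v to !(y u)
        refine ⟨Function.update y v (!(y u)), ?_, fun h => absurd h (asymm hα), fun _ => by
          simp [Function.update_self, Function.update_of_ne huv, Bool.not_not]⟩
        intro z
        refine le_trans (hy z) ?_
        rw [assignWeight_update, split_v]
        have hA : (0:ℚ) ≤ (if G.Adj u v then
            (if (!(y u)) ≠ y u then w s(v, u) else 0) - (if y v ≠ y u then w s(v, u) else 0)
            else 0) := by
          by_cases hadj : G.Adj u v
          · rw [if_pos hadj, if_pos (Bool.not_ne_self (y u)), if_neg (fun hc => hc heq'.symm)]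
            rcases hneg hα with h | h
            · exact absurd hadj h
            · rw [Sym2.eq_swap]
              linarith
          · rw [if_neg hadj]
        have hB : ∑ t ∈ C,
            ((if (!(y u)) ≠ y t then w s(v, t) else 0) - (if y v ≠ y t then w s(v, t) else 0))
            = S1 - S2 := by
          rw [hS1def, hS2def, ← Finset.sum_sub_distrib]
          apply Finset.sum_congr rfl
          intro t htC
          by_cases hvt : y v = y t
          · rw [if_pos (by rw [heq', hvt]; exact Bool.not_ne_self (y t)), if_pos hvt]
          · have hx : (!(y u)) = y t := by
              rw [heq']; cases h2 : y v <;> cases h3 : y t <;> simp_all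
            rw [if_neg (fun hc => hc hx), if_neg hvt]
        rw [hB]
        linarith
  · -- 0 < α
    by_cases heq : y u = y v
    · exact ⟨y, hy, fun _ => heq, fun h => absurd h (asymm hα)⟩
    · have hne : y u ≠ y v := heq
      have hcond : ∀ t, (y u ≠ y t) ↔ (y v = y t) := by
        intro t
        cases h1 : y u <;> cases h2 : y v <;> cases h3 : y t <;> simp_all
      by_cases hS : S1 ≤ S2
      · -- flip u to y v
        refine ⟨Function.update y u (y v), ?_, fun _ => by
          simp [Function.update_self, Function.update_of_ne (Ne.symm huv)],
          fun h => absurd h (asymm hα)⟩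
        intro z
        refine le_trans (hy z) ?_
        rw [assignWeight_update, split_u]
        have hA : (0:ℚ) ≤ (if G.Adj u v then
            (if y v ≠ y v then w s(u, v) else 0) - (if y u ≠ y v then w s(u, v) else 0)
            else 0) := by
          by_cases hadj : G.Adj u v
          · rw [if_pos hadj, if_neg (fun hc => hc rfl), if_pos hne]
            rcases hpos hα with h | h
            · exact absurd hadj h
            · linarith
          · rw [if_neg hadj]
        have hB : ∑ t ∈ C,
            ((if y v ≠ y t then w s(u, t) else 0) - (if y u ≠ y t then w s(u, t) else 0))
            = α * (S2 - S1) := by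
          rw [hS1def, hS2def, mul_sub, Finset.mul_sum, Finset.mul_sum, ← Finset.sum_sub_distrib]
          apply Finset.sum_congr rfl
          intro t htC
          have hw' := hw t (hmemC t htC)
          by_cases hvt : y v = y t
          · rw [if_neg (fun hc => hc hvt), if_pos ((hcond t).mpr hvt),
              if_neg (fun hc => hc hvt), if_pos hvt, hw']
            ring
          · rw [if_pos hvt, if_neg (fun hc => hvt ((hcond t).mp hc)),
              if_pos hvt, if_neg hvt, hw']
            ring
        rw [hB]
        have : (0:ℚ) ≤ α * (S2 - S1) := mul_nonneg hα.le (by linarith)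
        linarith
      · -- flip v to y u
        refine ⟨Function.update y v (y u), ?_, fun _ => by
          simp [Function.update_self, Function.update_of_ne huv],
          fun h => absurd h (asymm hα)⟩
        intro z
        refine le_trans (hy z) ?_
        rw [assignWeight_update, split_v]
        have hA : (0:ℚ) ≤ (if G.Adj u v then
            (if y u ≠ y u then w s(v, u) else 0) - (if y v ≠ y u then w s(v, u) else 0)
            else 0) := by
          by_cases hadj : G.Adj u v
          · rw [if_pos hadj, if_neg (fun hc => hc rfl), if_pos (Ne.symm hne)]
            rcases hpos hα with h | h
            · exact absurd hadj h
            · rw [Sym2.eq_swap]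
              linarith
          · rw [if_neg hadj]
        have hB : ∑ t ∈ C,
            ((if y u ≠ y t then w s(v, t) else 0) - (if y v ≠ y t then w s(v, t) else 0))
            = S1 - S2 := by
          rw [hS1def, hS2def, ← Finset.sum_sub_distrib]
          apply Finset.sum_congr rfl
          intro t htC
          by_cases hvt : y v = y t
          · rw [if_pos ((hcond t).mpr hvt), if_pos hvt]
          · rw [if_neg (fun hc => hvt ((hcond t).mp hc)), if_neg hvt]
        rw [hB]
        linarith
end

section
/- (Proposition 5, reduced-cost implication fixing) Let G=(V,E) be a finite simple undirected graph with edge weights w:E→ℚ. Let Ũ∈ℚ and w̃:E→ℚ with w̃(e)≥0 for all e∈E satisfy the reduced-cost bound: for every S⊆V, w(δ(S)) ≤ Ũ − Σ_{e∈δ(S)} w̃(e). Let L=w(δ(S0)) for some S0⊆V (a known cut weight). Let V'⊂V and y':V'→{0,1} be such that every optimal vertex assignment y satisfies y(v)=y'(v) for all v∈V'. Let u∈V∖V' and define Δ̃0 := Σ_{{u,v}∈δ(u), v∈V', y'(v)=0} w̃({u,v}) and Δ̃1 := Σ_{{u,v}∈δ(u), v∈V', y'(v)=1} w̃({u,v}).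 Then for every optimal vertex assignment y: if L+Δ̃0 > Ũ then y(u)=0, and if L+Δ̃1 > Ũ then y(u)=1. -/
variable {V : Type*}

/-- The sum `∑_{{u,v} ∈ δ(u), v ∈ A} w̃({u,v})` over the edges incident to `u`
whose other endpoint lies in `A`. -/
noncomputable def incidentSum [Fintype V] (G : SimpleGraph V) (tw : Sym2 V → ℚ)
    (u : V) (A : Set V) : ℚ := by
  classical
  exact ∑ v ∈ Finset.univ.filter (fun v => G.Adj u v ∧ v ∈ A), tw s(u, v)

/-
Let `y` be optimal with `y u = ¬b`. Every edge `{u, v}` with `v ∈ V'` and `y' v = b` then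
crosses the cut `δ(S)` of `S = {y = 1}`, since `y v = y' v = b`. As the reduced costs are
nonnegative, `Δ̃_b ≤ ∑_{e ∈ δ(S)} w̃(e)`, and the reduced-cost bound together with the optimality
of `y` gives `L ≤ w(δ(S)) ≤ Ũ - Δ̃_b`, contradicting `L + Δ̃_b > Ũ`.
-/

theorem Sym2.exists_mem_bool_ne_iff (y : V → Bool) (e : Sym2 V) :
    (∃ a ∈ e, ∃ b ∈ e, y a ≠ y b) ↔
      (∃ a ∈ e, y a = true) ∧ ∃ b ∈ e, ¬y b = true := by
  induction e using Sym2.ind with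
  | _ a b => cases ha : y a <;> cases hb : y b <;> simp [ha, hb]

section Cuts

variable [Fintype V] (G : SimpleGraph V)

theorem mem_cutFinset {U : Set V} {e : Sym2 V} : e ∈ cutFinset G U ↔ inCutSet G U e := by
  classical
  simp [cutFinset]

theorem assignWeight_eq_cutWeight (w : Sym2 V → ℚ) (y : V → Bool) :
    assignWeight G w y = cutWeight G w {v | y v = true} := by
  classical
  unfold assignWeight cutWeight
  congr 1
  ext e
  simp [mem_cutFinset, inCutSet, Sym2.exists_mem_bool_ne_iff]

theorem cutWeight_le_assignWeight_of_optimal (w : Sym2 V → ℚ) {y : V → Bool}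
    (hopt : ∀ z : V → Bool, assignWeight G w z ≤ assignWeight G w y) (S : Set V) :
    cutWeight G w S ≤ assignWeight G w y := by
  classical
  simpa [assignWeight_eq_cutWeight] using hopt (fun v => decide (v ∈ S))

theorem incidentSum_le_sum_cutFinset {tw : Sym2 V → ℚ} (htw : ∀ e ∈ G.edgeSet, 0 ≤ tw e)
    {u : V} {A S : Set V} (hsep : ∀ v ∈ A, G.Adj u v → (u ∈ S ↔ v ∉ S)) :
    incidentSum G tw u A ≤ ∑ e ∈ cutFinset G S, tw e := by
  classical
  unfold incidentSum
  refine (Finset.sum_map _ (Sym2.mkEmbedding u) tw).symm.le.trans ?_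
  refine Finset.sum_le_sum_of_subset_of_nonneg ?_ fun e he _ => htw e ((mem_cutFinset G).1 he).1
  intro e he
  obtain ⟨v, hv, rfl⟩ := Finset.mem_map.1 he
  obtain ⟨hadj, hvA⟩ := by simpa using hv
  have huv := hsep v hvA hadj
  refine (mem_cutFinset G).2 ⟨G.mem_edgeSet.2 hadj, ?_, ?_⟩ <;>
    by_cases hu : u ∈ S <;> simp_all

end Cuts

theorem cutWeight_add_incidentSum_le_of_optimal [Fintype V] {G : SimpleGraph V} {w : Sym2 V → ℚ}
    {Ut : ℚ} {tw : Sym2 V → ℚ} (htw : ∀ e ∈ G.edgeSet, 0 ≤ tw e)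
    (hbound : ∀ S : Set V, cutWeight G w S ≤ Ut - ∑ e ∈ cutFinset G S, tw e)
    (S0 : Set V) {V' : Set V} {y' : V → Bool}
    (hforced : ∀ y : V → Bool,
      (∀ z : V → Bool, assignWeight G w z ≤ assignWeight G w y) → ∀ v ∈ V', y v = y' v)
    {u : V} {y : V → Bool} (hopt : ∀ z : V → Bool, assignWeight G w z ≤ assignWeight G w y)
    {b : Bool} (hyu : y u = !b) :
    cutWeight G w S0 + incidentSum G tw u {v | v ∈ V' ∧ y' v = b} ≤ Ut := by
  set S : Set V := {v | y v = true}
  have hL : cutWeight G w S0 ≤ cutWeight G w S := by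
    rw [← assignWeight_eq_cutWeight]
    exact cutWeight_le_assignWeight_of_optimal G w hopt S0
  have hsep : ∀ v ∈ {v | v ∈ V' ∧ y' v = b}, G.Adj u v → (u ∈ S ↔ v ∉ S) := by
    rintro v ⟨hvV', hvb⟩ -
    have hyv : y v = b := (hforced y hopt v hvV').trans hvb
    cases b <;> simp [S, hyu, hyv]
  linarith [hbound S, incidentSum_le_sum_cutFinset G htw hsep]

theorem stmt8_general [Fintype V] (G : SimpleGraph V) (w : Sym2 V → ℚ)
    (Ut : ℚ) (tw : Sym2 V → ℚ) (htw : ∀ e ∈ G.edgeSet, 0 ≤ tw e)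
    (hbound : ∀ S : Set V, cutWeight G w S ≤ Ut - ∑ e ∈ cutFinset G S, tw e)
    (L : ℚ) (S0 : Set V) (hL : L = cutWeight G w S0)
    (V' : Set V) (y' : V → Bool)
    (hforced : ∀ y : V → Bool,
      (∀ z : V → Bool, assignWeight G w z ≤ assignWeight G w y) →
      ∀ v ∈ V', y v = y' v)
    (u : V) :
    ∀ y : V → Bool,
      (∀ z : V → Bool, assignWeight G w z ≤ assignWeight G w y) →
      (L + incidentSum G tw u {v | v ∈ V' ∧ y' v = false} > Ut → y u = false) ∧
      (L + incidentSum G tw u {v | v ∈ V' ∧ y' v = true} > Ut → y u = true) := by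
  intro y hopt
  subst hL
  have bound (b : Bool) (hyu : y u = !b) :=
    cutWeight_add_incidentSum_le_of_optimal htw hbound S0 hforced hopt hyu
  exact ⟨fun hgt => Classical.byContradiction fun hne =>
      (bound false (by simpa using hne)).not_gt hgt,
    fun hgt => Classical.byContradiction fun hne =>
      (bound true (by simpa using hne)).not_gt hgt⟩

/-- Proposition 5 (reduced-cost implication fixing): given an upper bound `Ut` and
nonnegative reduced costs `tw` satisfying the reduced-cost bound, a known cut weight `L`,
and a partial assignment `y'` on `V'` that every optimal vertex assignment respects,
the vertex `u ∉ V'` can be fixed whenever `L + Δ̃0 > Ut` resp. `L + Δ̃1 > Ut`. -/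
theorem stmt8 [Fintype V] (G : SimpleGraph V) (w : Sym2 V → ℚ)
    (Ut : ℚ) (tw : Sym2 V → ℚ) (htw : ∀ e ∈ G.edgeSet, 0 ≤ tw e)
    (hbound : ∀ S : Set V, cutWeight G w S ≤ Ut - ∑ e ∈ cutFinset G S, tw e)
    (L : ℚ) (S0 : Set V) (hL : L = cutWeight G w S0)
    (V' : Set V) (hV' : V' ⊂ Set.univ) (y' : V → Bool)
    (hforced : ∀ y : V → Bool,
      (∀ z : V → Bool, assignWeight G w z ≤ assignWeight G w y) →
      ∀ v ∈ V', y v = y' v)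
    (u : V) (hu : u ∉ V') :
    ∀ y : V → Bool,
      (∀ z : V → Bool, assignWeight G w z ≤ assignWeight G w y) →
      (L + incidentSum G tw u {v | v ∈ V' ∧ y' v = false} > Ut → y u = false) ∧
      (L + incidentSum G tw u {v | v ∈ V' ∧ y' v = true} > Ut → y u = true) :=
  stmt8_general G w Ut tw htw hbound L S0 hL V' y' hforced u
end

section
/- Let C be a simple cycle in a finite simple undirected graph G=(V,E), let e∈E∖C be a chord of C, and let C1, C2 be the two cycles with C1∪C2 = C∪{e} and C1∩C2 = {e}. Then for every F⊆C with |F| odd there exist F1⊆C1 and F2⊆C2 with |F1| and |F2| odd, e contained in exactly one of F1, F2, (F1∖{e}) and (F2∖{e}) partition F, (|F1|−1)+(|F2|−1) = |F|−1, and such that for every x:E→ℝ: (Σ_{a∈F} x(a) − Σ_{a∈C∖F} x(a)) = (Σ_{a∈F1} x(a) − Σ_{a∈C1∖F1} x(a)) + (Σ_{a∈F2} x(a) − Σ_{a∈C2∖F2} x(a)). In particular, the cycle inequality on C with odd set F is the sum of the two cycle inequalities on C1 with F1 and on C2 with F2. -/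
variable {V : Type*}

/-- `C` is the edge set of a cycle of `G`, i.e. of a closed walk without repeated edges. -/
def IsCycleEdgeSet [DecidableEq V] (G : SimpleGraph V) (C : Finset (Sym2 V)) : Prop :=
  ∃ (v : V) (p : G.Walk v v), p.IsTrail ∧ C = p.edges.toFinset

private lemma stmt9_aux [DecidableEq V] (C C1 C2 : Finset (Sym2 V)) (e : Sym2 V)
    (heC1 : e ∈ C1) (heC2 : e ∈ C2)
    (hDu : C1.erase e ∪ C2.erase e = C)
    (hDd : C1.erase e ∩ C2.erase e = ∅)
    (F : Finset (Sym2 V)) (hF : F ⊆ C) (hoddF : Odd F.card)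
    (hoddA : Odd (F ∩ C1.erase e).card) :
    ∃ F1 ⊆ C1, ∃ F2 ⊆ C2, Odd F1.card ∧ Odd F2.card ∧
      ((e ∈ F1 ∧ e ∉ F2) ∨ (e ∉ F1 ∧ e ∈ F2)) ∧
      (F1.erase e) ∪ (F2.erase e) = F ∧ (F1.erase e) ∩ (F2.erase e) = ∅ ∧
      ((F1.card : ℤ) - 1) + ((F2.card : ℤ) - 1) = (F.card : ℤ) - 1 ∧
      ∀ x : Sym2 V → ℝ,
        (∑ a ∈ F, x a) - (∑ a ∈ C \ F, x a) =
          ((∑ a ∈ F1, x a) - (∑ a ∈ C1 \ F1, x a)) +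
            ((∑ a ∈ F2, x a) - (∑ a ∈ C2 \ F2, x a)) := by
  set D1 := C1.erase e with hD1
  set D2 := C2.erase e with hD2
  set A := F ∩ D1 with hA
  set B := F ∩ D2 with hB
  have heD1 : e ∉ D1 := Finset.notMem_erase e C1
  have heD2 : e ∉ D2 := Finset.notMem_erase e C2
  have heA : e ∉ A := fun h => heD1 (Finset.mem_inter.mp h).2
  have heB : e ∉ B := fun h => heD2 (Finset.mem_inter.mp h).2
  have hDdisj : ∀ a, a ∈ D1 → a ∈ D2 → False := by
    intro a h1 h2
    have : a ∈ D1 ∩ D2 := Finset.mem_inter.mpr ⟨h1, h2⟩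
    rw [hDd] at this
    exact absurd this (Finset.notMem_empty a)
  have hAD1 : ∀ a, a ∈ A → a ∈ D1 := fun a h => (Finset.mem_inter.mp h).2
  have hBD2 : ∀ a, a ∈ B → a ∈ D2 := fun a h => (Finset.mem_inter.mp h).2
  have hABu : A ∪ B = F := by
    rw [hA, hB, ← Finset.inter_union_distrib_left, hDu,
      Finset.inter_eq_left.mpr hF]
  have hABd : Disjoint A B := by
    rw [Finset.disjoint_left]
    intro a ha hb
    exact hDdisj a (hAD1 a ha) (hBD2 a hb)
  have hcard : A.card + B.card = F.card := by
    rw [← Finset.card_union_of_disjoint hABd, hABu]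
  have hBeven : Even B.card := by
    rcases Nat.even_or_odd B.card with h | h
    · exact h
    · exfalso
      have := hoddA.add_odd h
      rw [hcard] at this
      exact (Nat.not_odd_iff_even.mpr this) hoddF
  refine ⟨A, fun a ha => Finset.mem_of_mem_erase (hAD1 a ha), insert e B,
    Finset.insert_subset heC2 (fun a ha => Finset.mem_of_mem_erase (hBD2 a ha)),
    hoddA, ?_, Or.inr ⟨heA, Finset.mem_insert_self e B⟩, ?_, ?_, ?_, ?_⟩
  · rw [Finset.card_insert_of_notMem heB]
    exact hBeven.add_one
  · rw [Finset.erase_eq_of_notMem heA, Finset.erase_insert heB]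
    exact hABu
  · rw [Finset.erase_eq_of_notMem heA, Finset.erase_insert heB]
    exact Finset.disjoint_iff_inter_eq_empty.mp hABd
  · rw [Finset.card_insert_of_notMem heB]
    push_cast
    omega
  · intro x
    have hsF : ∑ a ∈ F, x a = (∑ a ∈ A, x a) + ∑ a ∈ B, x a := by
      rw [← hABu, Finset.sum_union hABd]
    have hCF : C \ F = (D1 \ A) ∪ (D2 \ B) := by
      ext a
      have h1 := hAD1 a
      have h2 := hBD2 a
      have h3 := hDdisj a
      simp only [Finset.mem_sdiff, Finset.mem_union, ← hDu, ← hABu]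
      tauto
    have hdisj2 : Disjoint (D1 \ A) (D2 \ B) := by
      rw [Finset.disjoint_left]
      intro a ha hb
      exact hDdisj a (Finset.mem_sdiff.mp ha).1 (Finset.mem_sdiff.mp hb).1
    have hsCF : ∑ a ∈ C \ F, x a = (∑ a ∈ D1 \ A, x a) + ∑ a ∈ D2 \ B, x a := by
      rw [hCF, Finset.sum_union hdisj2]
    have hC1A : C1 \ A = insert e (D1 \ A) := by
      ext a
      have h1 := hAD1 a
      simp only [Finset.mem_sdiff, Finset.mem_insert, hD1, Finset.mem_erase]
      constructor
      · rintro ⟨haC1, haA⟩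
        by_cases h : a = e
        · exact Or.inl h
        · exact Or.inr ⟨⟨h, haC1⟩, haA⟩
      · rintro (rfl | ⟨⟨_, haC1⟩, haA⟩)
        · exact ⟨heC1, heA⟩
        · exact ⟨haC1, haA⟩
    have hsC1A : ∑ a ∈ C1 \ A, x a = x e + ∑ a ∈ D1 \ A, x a := by
      rw [hC1A, Finset.sum_insert (fun h => heD1 (Finset.mem_sdiff.mp h).1)]
    have hC2B : C2 \ insert e B = D2 \ B := by
      ext a
      simp only [Finset.mem_sdiff, Finset.mem_insert, hD2, Finset.mem_erase, not_or]
      tauto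
    have hsF2 : ∑ a ∈ insert e B, x a = x e + ∑ a ∈ B, x a :=
      Finset.sum_insert heB
    rw [hsF, hsCF, hsC1A, hC2B, hsF2]
    ring

/-- Splitting the cycle inequality of a simple cycle `C` with a chord `e` into the two
cycle inequalities of the two cycles `C1`, `C2` with `C1 ∪ C2 = C ∪ {e}` and
`C1 ∩ C2 = {e}`: for every odd `F ⊆ C` there are odd sets `F1 ⊆ C1`, `F2 ⊆ C2`
containing `e` exactly once in total, partitioning `F` apart from `e`, with matching
right-hand sides, such that the cycle inequality on `(C,F)` is the sum of those on
`(C1,F1)` and `(C2,F2)`. -/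
theorem stmt9 [Fintype V] [DecidableEq V] (G : SimpleGraph V)
    (C : Finset (Sym2 V)) (hC : IsSimpleCycleEdgeSet G C)
    (e : Sym2 V) (heE : e ∈ G.edgeSet) (heC : e ∉ C)
    (hchord : ∀ u ∈ e, ∃ f ∈ C, u ∈ f)
    (C1 C2 : Finset (Sym2 V))
    (hC1 : IsCycleEdgeSet G C1) (hC2 : IsCycleEdgeSet G C2)
    (hunion : C1 ∪ C2 = C ∪ {e}) (hinter : C1 ∩ C2 = {e}) :
    ∀ F ⊆ C, Odd F.card →
      ∃ F1 ⊆ C1, ∃ F2 ⊆ C2, Odd F1.card ∧ Odd F2.card ∧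
        ((e ∈ F1 ∧ e ∉ F2) ∨ (e ∉ F1 ∧ e ∈ F2)) ∧
        (F1.erase e) ∪ (F2.erase e) = F ∧ (F1.erase e) ∩ (F2.erase e) = ∅ ∧
        ((F1.card : ℤ) - 1) + ((F2.card : ℤ) - 1) = (F.card : ℤ) - 1 ∧
        ∀ x : Sym2 V → ℝ,
          (∑ a ∈ F, x a) - (∑ a ∈ C \ F, x a) =
            ((∑ a ∈ F1, x a) - (∑ a ∈ C1 \ F1, x a)) +
              ((∑ a ∈ F2, x a) - (∑ a ∈ C2 \ F2, x a)) := by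
  intro F hF hoddF
  have heC12 : e ∈ C1 ∩ C2 := by rw [hinter]; exact Finset.mem_singleton_self e
  have heC1 : e ∈ C1 := (Finset.mem_inter.mp heC12).1
  have heC2 : e ∈ C2 := (Finset.mem_inter.mp heC12).2
  have hDu : C1.erase e ∪ C2.erase e = C := by
    rw [← Finset.erase_union_distrib, hunion, Finset.union_comm,
      ← Finset.insert_eq, Finset.erase_insert heC]
  have hDd : C1.erase e ∩ C2.erase e = ∅ := by
    ext a
    simp only [Finset.mem_inter, Finset.mem_erase, Finset.notMem_empty, iff_false]
    rintro ⟨⟨hne, h1⟩, -, h2⟩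
    have : a ∈ C1 ∩ C2 := Finset.mem_inter.mpr ⟨h1, h2⟩
    rw [hinter, Finset.mem_singleton] at this
    exact hne this
  have hcard : (F ∩ C1.erase e).card + (F ∩ C2.erase e).card = F.card := by
    have hABd : Disjoint (F ∩ C1.erase e) (F ∩ C2.erase e) := by
      rw [Finset.disjoint_left]
      intro a ha hb
      have : a ∈ C1.erase e ∩ C2.erase e :=
        Finset.mem_inter.mpr ⟨(Finset.mem_inter.mp ha).2, (Finset.mem_inter.mp hb).2⟩
      rw [hDd] at this
      exact absurd this (Finset.notMem_empty a)
    rw [← Finset.card_union_of_disjoint hABd, ← Finset.inter_union_distrib_left,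
      hDu, Finset.inter_eq_left.mpr hF]
  rcases Nat.even_or_odd (F ∩ C1.erase e).card with hAe | hAo
  · -- then F ∩ C2.erase e is odd; use the swapped aux
    have hBo : Odd (F ∩ C2.erase e).card := by
      rcases Nat.even_or_odd (F ∩ C2.erase e).card with h | h
      · exfalso
        have := hAe.add h
        rw [hcard] at this
        exact (Nat.not_odd_iff_even.mpr this) hoddF
      · exact h
    obtain ⟨F2, hF2, F1, hF1, ho2, ho1, hd, hu, hi, hc, hs⟩ :=
      stmt9_aux C C2 C1 e heC2 heC1
        (by rw [Finset.union_comm]; exact hDu)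
        (by rw [Finset.inter_comm]; exact hDd) F hF hoddF hBo
    exact ⟨F1, hF1, F2, hF2, ho1, ho2, by tauto,
      by rw [Finset.union_comm]; exact hu,
      by rw [Finset.inter_comm]; exact hi,
      by linarith, fun x => by rw [hs x]; ring⟩
  · exact stmt9_aux C C1 C2 e heC1 heC2 hDu hDd F hF hoddF hAo
end

section
/- (Correctness of odd-cycle separation via the auxiliary graph) Let G=(V,E) be a finite simple undirected graph and x:E→[0,1]. Let H be the graph on vertex set V×{0,1} with, for each {u,v}∈E and i∈{0,1}, the parallel edge {(u,i),(v,i)} of weight p = x({u,v}) and the crossing edge {(u,i),(v,1−i)} of weight p = 1−x({u,v}). Then there exist v∈V and a walk in H from (v,0) to (v,1) of total p-weight strictly less than 1 if and only if there exist a simple cycle C of G and F⊆C with |F| odd such that Σ_{e∈F}(1−x(e)) + Σ_{e∈C∖F} x(e) < 1 (i.e., x violates some cycle inequality). -/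
variable {V : Type*}

/-- The auxiliary graph `H` for odd-cycle separation: two copies of `G` on `V × Bool`,
with parallel edges `{(u,i),(v,i)}` and crossing edges `{(u,i),(v,1−i)}` for every
edge `{u,v}` of `G`. -/
def auxGraph (G : SimpleGraph V) : SimpleGraph (V × Bool) :=
  SimpleGraph.comap Prod.fst G

/-- The weight of a step of a walk in the auxiliary graph: a parallel edge
`{(u,i),(v,i)}` has weight `x({u,v})`, a crossing edge `{(u,i),(v,1−i)}` has
weight `1 − x({u,v})`. -/
noncomputable def stepWeight (x : Sym2 V → ℝ) (a b : V × Bool) : ℝ :=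
  if a.2 = b.2 then x s(a.1, b.1) else 1 - x s(a.1, b.1)

/-- The total weight of a walk in the auxiliary graph (sum of the weights of its
traversed edges, with multiplicity). -/
noncomputable def walkWeight (G : SimpleGraph V) (x : Sym2 V → ℝ) {a b : V × Bool}
    (p : (auxGraph G).Walk a b) : ℝ :=
  (p.darts.map (fun d => stepWeight x d.toProd.1 d.toProd.2)).sum

/-!
A simple cycle `C` of `G` with an odd set `F ⊆ C` lifts to a walk in `auxGraph G` that uses a
crossing edge exactly above the edges of `F`. It runs from `(v, false)` to `(v, true)` because `|F|`
is odd, and its weight is the left-hand side of the cycle inequality.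

Conversely, take a walk from `(w, false)` to `(w, true)` of weight `< 1` and of minimal length.
Weights are nonnegative, so a closed subwalk could be cut out, and a subwalk between `(w', i)` and
`(w', !i)` would itself be a shorter such walk. Hence the projection of the walk to `G` revisits
no vertex; a walk of length two has weight exactly `1`, so the projection is a simple cycle, and the
edges above which the walk crosses form the odd set `F`.
-/

open SimpleGraph Walk

namespace SimpleGraph.Walk

variable {W : Type*} {G : SimpleGraph W}

theorem cons_isCycle_iff_isPath_and_two_le_length {u v : W} (p : G.Walk v u) (h : G.Adj u v) :
    (cons h p).IsCycle ↔ p.IsPath ∧ 2 ≤ p.length := by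
  have := isCycle_iff_isPath_tail_and_le_length (p := cons h p)
  simp only [getVert_cons_succ, tail_cons, isPath_copy, length_cons] at this
  exact this.trans (and_congr_right' (by omega))

variable [DecidableEq W]

theorem exists_isSubwalk_of_mem_support {u v x y : W} {p : G.Walk u v} (hx : x ∈ p.support)
    (hy : y ∈ p.support) : ∃ s : G.Walk x y, s.IsSubwalk p ∨ s.reverse.IsSubwalk p := by
  by_cases hyd : y ∈ (p.dropUntil x hx).support
  · exact ⟨_, .inl (((p.dropUntil x hx).isSubwalk_takeUntil hyd).trans (p.isSubwalk_dropUntil hx))⟩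
  · have hyt : y ∈ (p.takeUntil x hx).support := by
      rw [← p.take_spec hx, mem_support_append_iff] at hy
      tauto
    refine ⟨((p.takeUntil x hx).dropUntil y hyt).reverse, .inr ?_⟩
    rw [reverse_reverse]
    exact ((p.takeUntil x hx).isSubwalk_dropUntil hyt).trans (p.isSubwalk_takeUntil hx)

theorem exists_isSubwalk_not_nil_of_not_nodup_map {β : Type*} (f : W → β) {u v : W}
    {p : G.Walk u v} (h : ¬ (p.support.map f).Nodup) :
    ∃ (c d : W) (s : G.Walk c d), s.IsSubwalk p ∧ ¬ s.Nil ∧ f c = f d := by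
  by_cases hp : p.IsPath
  · obtain ⟨c, hc, d, hd, hfcd, hcd⟩ : ∃ c ∈ p.support, ∃ d ∈ p.support, f c = f d ∧ c ≠ d := by
      by_contra! hinj
      exact h (hp.support_nodup.map_on hinj)
    obtain ⟨s, hs | hs⟩ := exists_isSubwalk_of_mem_support hc hd
    · exact ⟨c, d, s, hs, fun hn => hcd hn.eq, hfcd⟩
    · exact ⟨d, c, s.reverse, hs, fun hn => hcd hn.eq.symm, hfcd.symm⟩
  · obtain ⟨c, s, hs, hn⟩ : ∃ c, ∃ s : G.Walk c c, s.IsSubwalk p ∧ ¬ s.Nil := by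
      simpa [isPath_iff_isSubwalk_imp_nil] using hp
    exact ⟨c, c, s, hs, hn, rfl⟩

end SimpleGraph.Walk

theorem List.sum_map_ite_mem {α M : Type*} [DecidableEq α] [AddCommMonoid M] {l : List α}
    {F : Finset α} (hl : l.Nodup) (hF : F ⊆ l.toFinset) (f g : α → M) :
    (l.map fun e => if e ∈ F then f e else g e).sum = ∑ e ∈ F, f e + ∑ e ∈ l.toFinset \ F, g e := by
  rw [← List.sum_toFinset _ hl, Finset.sum_ite, Finset.filter_mem_eq_inter,
    Finset.inter_eq_right.mpr hF, Finset.sdiff_eq_filter]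

theorem List.countP_mem_eq_card {α : Type*} [DecidableEq α] {l : List α} {F : Finset α}
    (hl : l.Nodup) (hF : F ⊆ l.toFinset) : l.countP (· ∈ F) = F.card := by
  rw [List.countP_eq_length_filter, ← List.toFinset_card_of_nodup (hl.filter _)]
  congr 1
  ext e
  simpa using fun he => List.mem_toFinset.mp (hF he)

abbrev auxGraph.proj (G : SimpleGraph V) : auxGraph G →g G := ⟨Prod.fst, id⟩

@[simp] lemma auxGraph.proj_apply (G : SimpleGraph V) (a : V × Bool) : auxGraph.proj G a = a.1 :=
  rfl

variable {G : SimpleGraph V} {x : Sym2 V → ℝ}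

lemma stepWeight_comm (a b : V × Bool) :
    stepWeight x a b = stepWeight x b a := by
  simp only [stepWeight, eq_comm (a := a.2), Sym2.eq_swap]

@[simp] lemma walkWeight_nil {a : V × Bool} : walkWeight G x (nil : (auxGraph G).Walk a a) = 0 := by
  simp [walkWeight]

@[simp] lemma walkWeight_cons {a b c : V × Bool} (h : (auxGraph G).Adj a b)
    (p : (auxGraph G).Walk b c) :
    walkWeight G x (cons h p) = stepWeight x a b + walkWeight G x p := by
  simp [walkWeight]

lemma walkWeight_append {a b c : V × Bool} (p : (auxGraph G).Walk a b)
    (q : (auxGraph G).Walk b c) :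
    walkWeight G x (p.append q) = walkWeight G x p + walkWeight G x q := by
  simp [walkWeight, darts_append]

lemma walkWeight_reverse {a b : V × Bool} (p : (auxGraph G).Walk a b) :
    walkWeight G x p.reverse = walkWeight G x p := by
  induction p with
  | nil => rfl
  | cons h p ih => simp [walkWeight_append, ih, stepWeight_comm, add_comm]

lemma walkWeight_nonneg (hx : ∀ e ∈ G.edgeSet, 0 ≤ x e ∧ x e ≤ 1) {a b : V × Bool}
    (p : (auxGraph G).Walk a b) : 0 ≤ walkWeight G x p := by
  induction p with
  | nil => simp
  | @cons a b _ h p ih =>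
    have he := hx _ (G.mem_edgeSet.mpr h)
    rw [walkWeight_cons]
    unfold stepWeight
    split_ifs <;> linarith

lemma three_le_length_of_walkWeight_lt_one {w : V} (q : (auxGraph G).Walk (w, false) (w, true))
    (hq : walkWeight G x q < 1) : 3 ≤ q.length := by
  rcases q with _ | ⟨h, _ | ⟨h', _ | ⟨_, _⟩⟩⟩
  · exact absurd h G.irrefl
  · simp [walkWeight, stepWeight, Sym2.eq_swap] at hq
    split_ifs at hq <;> simp_all
  · simp

lemma exists_walk_false_true_of_ne {c d : V × Bool} (hcd : c.1 = d.1) (hne : c ≠ d)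
    (s : (auxGraph G).Walk c d) : ∃ (w : V) (t : (auxGraph G).Walk (w, false) (w, true)),
      t.length = s.length ∧ walkWeight G x t = walkWeight G x s := by
  obtain ⟨c, i⟩ := c
  obtain ⟨d, j⟩ := d
  obtain rfl : c = d := hcd
  cases i <;> cases j
  · simp at hne
  · exact ⟨c, s, rfl, rfl⟩
  · exact ⟨c, s.reverse, length_reverse s, walkWeight_reverse s⟩
  · simp at hne

lemma exists_shorter_of_isSubwalk (hx : ∀ e ∈ G.edgeSet, 0 ≤ x e ∧ x e ≤ 1) {w : V}
    {q : (auxGraph G).Walk (w, false) (w, true)} {c d : V × Bool} {s : (auxGraph G).Walk c d}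
    (hs : s.IsSubwalk q) (hsn : ¬ s.Nil) (hcd : c.1 = d.1) (hlt : s.length < q.length) :
    ∃ (w' : V) (q' : (auxGraph G).Walk (w', false) (w', true)),
      q'.length < q.length ∧ walkWeight G x q' ≤ walkWeight G x q := by
  obtain ⟨ru, rv, rfl⟩ := hs
  have hru := walkWeight_nonneg hx ru
  have hrv := walkWeight_nonneg hx rv
  have hsw := walkWeight_nonneg hx s
  simp only [length_append, walkWeight_append] at hlt ⊢
  by_cases hc : c = d
  · subst hc
    have := not_nil_iff_lt_length.mp hsn
    exact ⟨w, ru.append rv, by rw [length_append]; omega, by rw [walkWeight_append]; linarith⟩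
  · obtain ⟨w', t, hlen, hwt⟩ := exists_walk_false_true_of_ne hcd hc s
    exact ⟨w', t, by omega, by linarith⟩

/-- An edge of `auxGraph G` is crossing when its image under `Prod.snd` is not a loop. -/
def CrossesAlong (F : Finset (Sym2 V)) {a b : V × Bool} (q : (auxGraph G).Walk a b) : Prop :=
  ∀ e ∈ q.edges, (¬ (e.map Prod.snd).IsDiag ↔ e.map Prod.fst ∈ F)

lemma crossesAlong_cons {F : Finset (Sym2 V)} {a b c : V × Bool} (h : (auxGraph G).Adj a b)
    (q : (auxGraph G).Walk b c) :
    CrossesAlong F (cons h q) ↔ (a.2 ≠ b.2 ↔ s(a.1, b.1) ∈ F) ∧ CrossesAlong F q := by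
  simp [CrossesAlong]

section

variable [DecidableEq V]

lemma isCycle_map_of_minimal (hx : ∀ e ∈ G.edgeSet, 0 ≤ x e ∧ x e ≤ 1) {w : V}
    (q : (auxGraph G).Walk (w, false) (w, true)) (hq : walkWeight G x q < 1)
    (hmin : ∀ (w' : V) (q' : (auxGraph G).Walk (w', false) (w', true)),
      walkWeight G x q' < 1 → q.length ≤ q'.length) :
    (q.map (auxGraph.proj G)).IsCycle := by
  have h3 := three_le_length_of_walkWeight_lt_one q hq
  cases q with
  | cons h q' =>
    rw [map_cons, cons_isCycle_iff_isPath_and_two_le_length, length_map]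
    refine ⟨?_, by simpa using h3⟩
    rw [isPath_def, Walk.support_map]
    by_contra hnd
    obtain ⟨c, d, s, hs, hsn, hcd⟩ := exists_isSubwalk_not_nil_of_not_nodup_map _ hnd
    obtain ⟨w', q'', hlt, hle⟩ := exists_shorter_of_isSubwalk hx (hs.cons h) hsn hcd
      (by have := length_le_of_isSubwalk hs; simp only [length_cons]; omega)
    have := hmin w' q'' (hle.trans_lt hq)
    omega

lemma exists_crossesAlong (F : Finset (Sym2 V)) {u v : V} (p : G.Walk u v) (i : Bool) :
    ∃ (j : Bool) (q : (auxGraph G).Walk (u, i) (v, j)),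
      q.map (auxGraph.proj G) = p ∧ CrossesAlong F q := by
  induction p generalizing i with
  | nil => exact ⟨i, nil, rfl, by simp [CrossesAlong]⟩
  | @cons u v w h p ih =>
    obtain ⟨j, q, hqp, hq⟩ := ih (if s(u, v) ∈ F then !i else i)
    refine ⟨j, cons (show (auxGraph G).Adj (u, i) (v, _) from h) q, by rw [map_cons, hqp], ?_⟩
    rw [crossesAlong_cons]
    exact ⟨by split_ifs <;> simp [*], hq⟩

section

variable {F : Finset (Sym2 V)} {a b : V × Bool} {q : (auxGraph G).Walk a b}

lemma walkWeight_eq_sum_of_crossesAlong (hq : CrossesAlong F q) :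
    walkWeight G x q =
      ((q.map (auxGraph.proj G)).edges.map fun e => if e ∈ F then 1 - x e else x e).sum := by
  induction q with
  | nil => simp
  | @cons a b c h q ih =>
    obtain ⟨hab, hq⟩ := (crossesAlong_cons h q).mp hq
    rw [walkWeight_cons, ih hq, map_cons, edges_cons, List.map_cons, List.sum_cons]
    by_cases hsame : a.2 = b.2 <;> simp [stepWeight, hsame, ← hab]

lemma odd_countP_iff_of_crossesAlong (hq : CrossesAlong F q) :
    Odd ((q.map (auxGraph.proj G)).edges.countP (· ∈ F)) ↔ a.2 ≠ b.2 := by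
  induction q with
  | nil => simp
  | @cons a b c h q ih =>
    obtain ⟨hab, hq⟩ := (crossesAlong_cons h q).mp hq
    rw [map_cons, edges_cons, List.countP_cons]
    generalize List.countP _ _ = n at ih ⊢
    simp only [auxGraph.proj_apply, decide_eq_true_eq]
    split_ifs with hs
    · rw [Nat.odd_add_one, ih hq]
      revert hs
      rw [← hab]
      cases a.2 <;> cases b.2 <;> cases c.2 <;> decide
    · rw [add_zero, ih hq, not_not.mp (mt hab.mp hs)]

lemma walkWeight_eq_of_crossesAlong (hq : CrossesAlong F q)
    (hnd : (q.map (auxGraph.proj G)).edges.Nodup)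
    (hF : F ⊆ (q.map (auxGraph.proj G)).edges.toFinset) :
    walkWeight G x q =
      ∑ e ∈ F, (1 - x e) + ∑ e ∈ (q.map (auxGraph.proj G)).edges.toFinset \ F, x e := by
  rw [walkWeight_eq_sum_of_crossesAlong hq, List.sum_map_ite_mem hnd hF]

lemma odd_card_iff_of_crossesAlong (hq : CrossesAlong F q)
    (hnd : (q.map (auxGraph.proj G)).edges.Nodup)
    (hF : F ⊆ (q.map (auxGraph.proj G)).edges.toFinset) : Odd F.card ↔ a.2 ≠ b.2 := by
  rw [← List.countP_mem_eq_card hnd hF, odd_countP_iff_of_crossesAlong hq]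

def crossingEdges (q : (auxGraph G).Walk a b) : Finset (Sym2 V) :=
  ((q.edges.filter fun e => ¬ (e.map Prod.snd).IsDiag).map (Sym2.map Prod.fst)).toFinset

lemma crossingEdges_subset : crossingEdges q ⊆ (q.map (auxGraph.proj G)).edges.toFinset := by
  intro e he
  simp only [crossingEdges, List.mem_toFinset, List.mem_map, List.mem_filter] at he
  obtain ⟨e', ⟨he', -⟩, rfl⟩ := he
  rw [List.mem_toFinset, edges_map]
  exact List.mem_map_of_mem he'

lemma crossesAlong_crossingEdges (hnd : (q.map (auxGraph.proj G)).edges.Nodup) :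
    CrossesAlong (crossingEdges q) q := by
  rw [edges_map] at hnd
  intro e he
  constructor
  · intro hc
    exact List.mem_toFinset.mpr (List.mem_map_of_mem (List.mem_filter.mpr ⟨he, by simpa using hc⟩))
  · intro hm
    obtain ⟨e', he', hee'⟩ := List.mem_map.mp (List.mem_toFinset.mp hm)
    rw [List.mem_filter] at he'
    rw [← List.inj_on_of_nodup_map hnd he'.1 he hee']
    simpa using he'.2

end

theorem exists_cycleInequality_of_walkWeight_lt_one
    (hx : ∀ e ∈ G.edgeSet, 0 ≤ x e ∧ x e ≤ 1) {v : V} (p : (auxGraph G).Walk (v, false) (v, true))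
    (hp : walkWeight G x p < 1) :
    ∃ (C F : Finset (Sym2 V)), IsSimpleCycleEdgeSet G C ∧ F ⊆ C ∧ Odd F.card ∧
      (∑ e ∈ F, (1 - x e)) + (∑ e ∈ C \ F, x e) < 1 := by
  classical
  have hex : ∃ n, ∃ (v : V) (p : (auxGraph G).Walk (v, false) (v, true)),
      p.length = n ∧ walkWeight G x p < 1 := ⟨_, v, p, rfl, hp⟩
  obtain ⟨w, q, hlen, hq⟩ := Nat.find_spec hex
  have hcyc := isCycle_map_of_minimal hx q hq fun w' q' hq' =>
    hlen ▸ Nat.find_min' hex ⟨w', q', rfl, hq'⟩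
  have hnd := hcyc.edges_nodup
  have hF := crossesAlong_crossingEdges hnd
  refine ⟨_, crossingEdges q, ⟨w, _, hcyc, rfl⟩, crossingEdges_subset,
    (odd_card_iff_of_crossesAlong hF hnd crossingEdges_subset).mpr (by simp), ?_⟩
  rwa [← walkWeight_eq_of_crossesAlong hF hnd crossingEdges_subset]

theorem exists_walkWeight_lt_one_of_cycleInequality {C F : Finset (Sym2 V)}
    (hC : IsSimpleCycleEdgeSet G C) (hFC : F ⊆ C) (hodd : Odd F.card)
    (hlt : (∑ e ∈ F, (1 - x e)) + (∑ e ∈ C \ F, x e) < 1) :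
    ∃ (v : V) (p : (auxGraph G).Walk (v, false) (v, true)), walkWeight G x p < 1 := by
  obtain ⟨v, p, hcyc, rfl⟩ := hC
  obtain ⟨j, q, rfl, hq⟩ := exists_crossesAlong F p false
  have hnd := hcyc.edges_nodup
  obtain rfl : j = true := by simpa using (odd_card_iff_of_crossesAlong hq hnd hFC).mp hodd
  exact ⟨v, q, walkWeight_eq_of_crossesAlong hq hnd hFC ▸ hlt⟩

end

theorem stmt11_general [DecidableEq V] (G : SimpleGraph V) (x : Sym2 V → ℝ)
    (hx : ∀ e ∈ G.edgeSet, 0 ≤ x e ∧ x e ≤ 1) :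
    (∃ (v : V) (p : (auxGraph G).Walk (v, false) (v, true)), walkWeight G x p < 1) ↔
    (∃ (C F : Finset (Sym2 V)), IsSimpleCycleEdgeSet G C ∧ F ⊆ C ∧ Odd F.card ∧
      (∑ e ∈ F, (1 - x e)) + (∑ e ∈ C \ F, x e) < 1) :=
  ⟨fun ⟨_, p, hp⟩ => exists_cycleInequality_of_walkWeight_lt_one hx p hp,
    fun ⟨_, _, hC, hFC, hodd, hlt⟩ => exists_walkWeight_lt_one_of_cycleInequality hC hFC hodd hlt⟩

/-- Correctness of odd-cycle separation via the auxiliary graph: for `x : E → [0,1]`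
there is a walk from `(v,0)` to `(v,1)` in `H` of weight `< 1` for some `v` if and only
if `x` violates some cycle inequality on a simple cycle of `G`. -/
theorem stmt11 [Fintype V] [DecidableEq V] (G : SimpleGraph V) (x : Sym2 V → ℝ)
    (hx : ∀ e ∈ G.edgeSet, 0 ≤ x e ∧ x e ≤ 1) :
    (∃ (v : V) (p : (auxGraph G).Walk (v, false) (v, true)), walkWeight G x p < 1) ↔
    (∃ (C F : Finset (Sym2 V)), IsSimpleCycleEdgeSet G C ∧ F ⊆ C ∧ Odd F.card ∧
      (∑ e ∈ F, (1 - x e)) + (∑ e ∈ C \ F, x e) < 1) :=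
  stmt11_general G x hx
end

section
/- Let G=(V,E) be a finite simple undirected graph, x:E→[0,1], and let e_1,…,e_m be the edges (with multiplicity, in order) of a closed walk in G. If F⊆{1,…,m} has odd cardinality and Σ_{i∈F}(1−x(e_i)) + Σ_{i∈{1,…,m}∖F} x(e_i) < 1, then there exist a simple cycle C of G and F'⊆C with |F'| odd such that Σ_{e∈F'}(1−x(e)) + Σ_{e∈C∖F'} x(e) < 1. -/
/-!
Induction on the length of the closed walk, carrying the odd set `F` as a tag on each edge.
A closed walk that is not a simple cycle either runs along one edge and straight back, where an
odd tagging makes the left-hand side exactly `1`, or contains a repeated vertex and so splits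
into two shorter closed walks. The tag counts of the two parts add up to an odd number, so one
part has odd count, and as all terms lie in `[0, 1]` its left-hand side is at most the whole one.
On a simple cycle the edges are distinct, so the sum along the walk is the left-hand side of its
cycle inequality.
-/

variable {V : Type*}

open SimpleGraph

/-- An edge tagged `true` belongs to the odd set `F`. -/
noncomputable def cycleIneqLHS (x : Sym2 V → ℝ) (L : List (Sym2 V × Bool)) : ℝ :=
  (L.map fun eb => if eb.2 then 1 - x eb.1 else x eb.1).sum

section cycleIneqLHS

variable (x : Sym2 V → ℝ)

@[simp]
lemma cycleIneqLHS_nil : cycleIneqLHS x [] = 0 := rfl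

@[simp]
lemma cycleIneqLHS_cons (e : Sym2 V) (b : Bool) (L : List (Sym2 V × Bool)) :
    cycleIneqLHS x ((e, b) :: L) = (if b then 1 - x e else x e) + cycleIneqLHS x L := rfl

@[simp]
lemma cycleIneqLHS_append (L₁ L₂ : List (Sym2 V × Bool)) :
    cycleIneqLHS x (L₁ ++ L₂) = cycleIneqLHS x L₁ + cycleIneqLHS x L₂ := by
  simp [cycleIneqLHS]

variable {x}

lemma cycleIneqLHS_nonneg {L : List (Sym2 V × Bool)}
    (hx : ∀ eb ∈ L, 0 ≤ x eb.1 ∧ x eb.1 ≤ 1) : 0 ≤ cycleIneqLHS x L := by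
  refine List.sum_nonneg fun r hr => ?_
  obtain ⟨⟨e, b⟩, he, rfl⟩ := List.mem_map.mp hr
  obtain ⟨h₀, h₁⟩ := hx _ he
  cases b <;> simp <;> linarith

lemma cycleIneqLHS_eq_one_of_map_fst_eq_pair {L : List (Sym2 V × Bool)} {e : Sym2 V}
    (hL : L.map Prod.fst = [e, e]) (hodd : Odd (L.countP (·.2))) : cycleIneqLHS x L = 1 := by
  obtain ⟨⟨e₁, b₁⟩, ⟨e₂, b₂⟩, rfl⟩ : ∃ a b, L = [a, b] :=
    List.length_eq_two.mp (by simpa using congrArg List.length hL)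
  simp only [List.map_cons, List.map_nil, List.cons.injEq, and_true] at hL
  obtain ⟨rfl, rfl⟩ := hL
  cases b₁ <;> cases b₂ <;> simp [Nat.odd_iff] at hodd ⊢

lemma cycleIneqLHS_eq_sum_sdiff [DecidableEq V] {L : List (Sym2 V × Bool)}
    (hL : (L.map Prod.fst).Nodup) :
    cycleIneqLHS x L = ∑ e ∈ ((L.filter (·.2)).map Prod.fst).toFinset, (1 - x e) +
      ∑ e ∈ (L.map Prod.fst).toFinset \ ((L.filter (·.2)).map Prod.fst).toFinset, x e := by
  induction L with
  | nil => simp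
  | cons eb L ih =>
    obtain ⟨e, b⟩ := eb
    rw [List.map_cons, List.nodup_cons] at hL
    have hF : ((L.filter (·.2)).map Prod.fst) ⊆ L.map Prod.fst :=
      (List.filter_sublist.map Prod.fst).subset
    have he : e ∉ ((L.filter (·.2)).map Prod.fst).toFinset := fun h =>
      hL.1 (hF (List.mem_toFinset.mp h))
    cases b
    · simp [ih hL.2, Finset.insert_sdiff_of_notMem _ he, Finset.sum_insert, hL.1]
      ring
    · simp [ih hL.2, Finset.sum_insert, he, Finset.insert_sdiff_insert,
        Finset.sdiff_insert_of_notMem, hL.1]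
      ring

end cycleIneqLHS

namespace SimpleGraph.Walk

variable {G : SimpleGraph V}

lemma edges_eq_singleton_of_support_nodup_of_mem_edges {u v : V} {q : G.Walk u v}
    (hq : q.support.Nodup) (he : s(u, v) ∈ q.edges) : q.edges = [s(u, v)] := by
  cases q with
  | nil => simp at he
  | @cons _ w _ h r =>
    rw [support_cons, List.nodup_cons] at hq
    rw [edges_cons, List.mem_cons] at he
    rcases he with he | he
    · obtain rfl : w = v := by
        rcases Sym2.eq_iff.mp he with ⟨-, rfl⟩ | ⟨rfl, rfl⟩
        · rfl
        · exact absurd rfl h.ne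
      rw [(isPath_iff_nil.mp (IsPath.mk' hq.2)).eq_nil]
      rfl
    · exact absurd (fst_mem_support_of_mem_edges r he) hq.1

lemma exists_closed_subwalk_of_not_support_nodup [DecidableEq V] {u v : V} (q : G.Walk u v)
    (hq : ¬ q.support.Nodup) :
    ∃ (a : V) (c : G.Walk a a) (q' : G.Walk u v) (E₁ E₃ : List (Sym2 V)),
      q.edges = E₁ ++ c.edges ++ E₃ ∧ q'.edges = E₁ ++ E₃ ∧ 0 < c.length := by
  induction q with
  | nil => simp at hq
  | @cons u w v h r ih =>
    by_cases hu : u ∈ r.support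
    · refine ⟨u, cons h (r.takeUntil u hu), r.dropUntil u hu, [], (r.dropUntil u hu).edges,
        ?_, rfl, by simp⟩
      conv_lhs => rw [edges_cons, ← r.take_spec hu, edges_append]
      rfl
    · have hr : ¬ r.support.Nodup := by simpa [support_cons, hu] using hq
      obtain ⟨a, c, r', E₁, E₃, hr, hr', hc⟩ := ih hr
      exact ⟨a, c, cons h r', s(u, w) :: E₁, E₃, by simp [hr], by simp [hr'], hc⟩

lemma isCycle_or_edges_eq_pair_or_exists_closed_subwalk [DecidableEq V] {v : V}
    (p : G.Walk v v) (hp : 0 < p.length) :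
    p.IsCycle ∨ (∃ e, p.edges = [e, e]) ∨
      ∃ (a : V) (c : G.Walk a a) (p' : G.Walk v v) (E₁ E₃ : List (Sym2 V)),
        p.edges = E₁ ++ c.edges ++ E₃ ∧ p'.edges = E₁ ++ E₃ ∧
          c.length < p.length ∧ p'.length < p.length := by
  cases p with
  | nil => simp at hp
  | @cons _ w _ h q =>
    by_cases hq : q.support.Nodup
    · by_cases he : s(v, w) ∈ q.edges
      · rw [Sym2.eq_swap] at he
        exact Or.inr (Or.inl ⟨s(v, w), by
          rw [edges_cons, edges_eq_singleton_of_support_nodup_of_mem_edges hq he, Sym2.eq_swap]⟩)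
      · exact Or.inl ((cons_isCycle_iff q h).mpr ⟨IsPath.mk' hq, he⟩)
    · obtain ⟨a, c, q', E₁, E₃, hq, hq', hc⟩ :=
        exists_closed_subwalk_of_not_support_nodup q hq
      refine Or.inr (Or.inr
        ⟨a, c, cons h q', s(v, w) :: E₁, E₃, by simp [hq], by simp [hq'], ?_⟩)
      have hlen := congrArg List.length hq
      have hlen' := congrArg List.length hq'
      simp only [length_edges, List.length_append, length_cons] at hlen hlen' ⊢
      omega

end SimpleGraph.Walk

def HasViolatedSimpleCycleIneq [DecidableEq V] (G : SimpleGraph V) (x : Sym2 V → ℝ) : Prop :=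
  ∃ (C F' : Finset (Sym2 V)), IsSimpleCycleEdgeSet G C ∧ F' ⊆ C ∧ Odd F'.card ∧
    (∑ e ∈ F', (1 - x e)) + (∑ e ∈ C \ F', x e) < 1

section ClosedWalk

variable {G : SimpleGraph V} {x : Sym2 V → ℝ} {L : List (Sym2 V × Bool)}

lemma hasViolatedSimpleCycleIneq_of_isCycle [DecidableEq V] {v : V} {p : G.Walk v v}
    (hp : p.IsCycle) (hL : L.map Prod.fst = p.edges) (hodd : Odd (L.countP (·.2)))
    (hlt : cycleIneqLHS x L < 1) : HasViolatedSimpleCycleIneq G x := by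
  have hnodup : (L.map Prod.fst).Nodup := hL ▸ hp.edges_nodup
  have hsub : ((L.filter (·.2)).map Prod.fst).Sublist (L.map Prod.fst) :=
    List.filter_sublist.map Prod.fst
  refine ⟨p.edges.toFinset, ((L.filter (·.2)).map Prod.fst).toFinset, ⟨v, p, hp, rfl⟩,
    fun e he => ?_, ?_, ?_⟩
  · rw [← hL]
    exact List.mem_toFinset.mpr (hsub.subset (List.mem_toFinset.mp he))
  · rwa [List.toFinset_card_of_nodup (hsub.nodup hnodup), List.length_map,
      ← List.countP_eq_length_filter]
  · rwa [← hL, ← cycleIneqLHS_eq_sum_sdiff hnodup]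

lemma cycleIneqLHS_nonneg_of_map_fst_eq_edges (hx : ∀ e ∈ G.edgeSet, 0 ≤ x e ∧ x e ≤ 1)
    {u w : V} (p : G.Walk u w) (hL : L.map Prod.fst = p.edges) : 0 ≤ cycleIneqLHS x L :=
  cycleIneqLHS_nonneg fun _ heb =>
    hx _ (p.edges_subset_edgeSet (hL ▸ List.mem_map_of_mem heb))

theorem hasViolatedSimpleCycleIneq_of_closed_walk [DecidableEq V]
    (hx : ∀ e ∈ G.edgeSet, 0 ≤ x e ∧ x e ≤ 1) {v : V} (p : G.Walk v v)
    (hL : L.map Prod.fst = p.edges) (hodd : Odd (L.countP (·.2)))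
    (hlt : cycleIneqLHS x L < 1) : HasViolatedSimpleCycleIneq G x := by
  induction hn : p.length using Nat.strong_induction_on generalizing v p L with
  | _ n ih =>
  have hp : 0 < p.length := by
    by_contra! h
    have hL₀ : L = [] := by simpa [Nat.le_zero.mp h] using congrArg List.length hL
    simp [hL₀] at hodd
  rcases p.isCycle_or_edges_eq_pair_or_exists_closed_subwalk hp with
    hcycle | ⟨e, he⟩ | ⟨a, c, p', E₁, E₃, hp_eq, hp', hc_lt, hp'_lt⟩
  · exact hasViolatedSimpleCycleIneq_of_isCycle hcycle hL hodd hlt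
  · exact absurd hlt (by rw [cycleIneqLHS_eq_one_of_map_fst_eq_pair (hL.trans he) hodd]; simp)
  · obtain ⟨L₁₂, L₃, rfl, h₁₂, h₃⟩ := List.map_eq_append_iff.mp (hL.trans hp_eq)
    obtain ⟨L₁, L₂, rfl, h₁, h₂⟩ := List.map_eq_append_iff.mp h₁₂
    have h₁₃ : (L₁ ++ L₃).map Prod.fst = p'.edges := by
      rw [List.map_append, h₁, h₃, hp']
    have hc_nonneg := cycleIneqLHS_nonneg_of_map_fst_eq_edges hx c h₂
    have hp'_nonneg := cycleIneqLHS_nonneg_of_map_fst_eq_edges hx p' h₁₃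
    simp only [cycleIneqLHS_append, List.countP_append] at hlt hodd hp'_nonneg
    by_cases hodd₂ : Odd (L₂.countP (·.2))
    · exact ih _ (hn ▸ hc_lt) c h₂ hodd₂ (by linarith) rfl
    · refine ih _ (hn ▸ hp'_lt) p' h₁₃ ?_ (by simp only [cycleIneqLHS_append]; linarith) rfl
      rw [List.countP_append, Nat.odd_iff]
      rw [Nat.odd_iff] at hodd
      rw [Nat.not_odd_iff] at hodd₂
      omega

end ClosedWalk

lemma countP_ofFn_decide_mem {α : Type*} {n : ℕ} (f : Fin n → α) (F : Finset (Fin n)) :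
    (List.ofFn fun i => (f i, decide (i ∈ F))).countP (·.2) = F.card := by
  rw [List.ofFn_eq_map, List.countP_map, Function.comp_def, ← Finset.sum_filter_count_eq_countP]
  simp [List.count_finRange]

lemma cycleIneqLHS_ofFn {n : ℕ} (x : Sym2 V → ℝ) (f : Fin n → Sym2 V) (F : Finset (Fin n)) :
    cycleIneqLHS x (List.ofFn fun i => (f i, decide (i ∈ F))) =
      ∑ i ∈ F, (1 - x (f i)) + ∑ i ∈ Fᶜ, x (f i) := by
  rw [cycleIneqLHS, List.map_ofFn, List.sum_ofFn]
  simp [Finset.sum_ite, Finset.compl_eq_univ_sdiff, Finset.filter_notMem_eq_sdiff]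

theorem stmt12_general [DecidableEq V] (G : SimpleGraph V) (x : Sym2 V → ℝ)
    (hx : ∀ e ∈ G.edgeSet, 0 ≤ x e ∧ x e ≤ 1)
    (v : V) (p : G.Walk v v)
    (F : Finset (Fin p.edges.length)) (hodd : Odd F.card)
    (hviol : (∑ i ∈ F, (1 - x (p.edges.get i))) + (∑ i ∈ Fᶜ, x (p.edges.get i)) < 1) :
    ∃ (C F' : Finset (Sym2 V)), IsSimpleCycleEdgeSet G C ∧ F' ⊆ C ∧ Odd F'.card ∧
      (∑ e ∈ F', (1 - x e)) + (∑ e ∈ C \ F', x e) < 1 := by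
  refine hasViolatedSimpleCycleIneq_of_closed_walk hx p
    (L := List.ofFn fun i => (p.edges.get i, decide (i ∈ F))) ?_ ?_ ?_
  · rw [List.map_ofFn]
    exact List.ofFn_get _
  · rwa [countP_ofFn_decide_mem]
  · rwa [cycleIneqLHS_ofFn]

/-- If `x : E → [0,1]` violates a cycle inequality along a closed walk (edges counted
with multiplicity, odd index set `F`), then `x` violates the cycle inequality of some
simple cycle of `G`. -/
theorem stmt12 [Fintype V] [DecidableEq V] (G : SimpleGraph V) (x : Sym2 V → ℝ)
    (hx : ∀ e ∈ G.edgeSet, 0 ≤ x e ∧ x e ≤ 1)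
    (v : V) (p : G.Walk v v)
    (F : Finset (Fin p.edges.length)) (hodd : Odd F.card)
    (hviol : (∑ i ∈ F, (1 - x (p.edges.get i))) + (∑ i ∈ Fᶜ, x (p.edges.get i)) < 1) :
    ∃ (C F' : Finset (Sym2 V)), IsSimpleCycleEdgeSet G C ∧ F' ⊆ C ∧ Odd F'.card ∧
      (∑ e ∈ F', (1 - x e)) + (∑ e ∈ C \ F', x e) < 1 :=
  stmt12_general G x hx v p F hodd hviol
end

section
/- (Correctness of the prefix-sum chord check) Let G=(V,E) be a finite simple undirected graph, x:E→[0,1], and let C = {{v1,v2},{v2,v3},…,{v_{k−1},v_k}} with v_k=v_1 be a simple cycle of G, and F⊆C. For i=2,…,k define P_i := {{v1,v2},…,{v_{i−1},v_i}}, f(i) := |F∩P_i|, and q(i) := Σ_{e∈F∩P_i}(1−x(e)) + Σ_{e∈P_i∖F} x(e). Suppose {v_j,v_i}∈E is a chord of C with 2≤j<i≤k−1 and f(i)−f(j) is even. Let C' := (P_i∖P_j) ∪ {{v_j,v_i}} (a cycle) and F' := (F∩(P_i∖P_j)) ∪ {{v_j,v_i}}. Then |F'| is odd and Σ_{e∈F'}(1−x(e))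 + Σ_{e∈C'∖F'} x(e) = q(i) − q(j) + 1 − x({v_j,v_i}). In particular, the cycle inequality for (C',F') is violated by x if and only if q(i) − q(j) + 1 − x({v_j,v_i}) < 1. -/
variable {V : Type*}

/-- `P_m := {{v_1,v_2}, …, {v_{m−1},v_m}}`, the prefix edge set of the cycle given by
the vertex sequence `v`. -/
def cyclePrefix [DecidableEq V] (v : ℕ → V) (m : ℕ) : Finset (Sym2 V) :=
  (Finset.Icc 1 (m - 1)).image (fun t => s(v t, v (t + 1)))

/-- `q(m) := ∑_{e ∈ F ∩ P_m} (1 − x(e)) + ∑_{e ∈ P_m ∖ F} x(e)`, the prefix sums used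
in the chord check. -/
noncomputable def prefQ [DecidableEq V] (x : Sym2 V → ℝ) (v : ℕ → V)
    (F : Finset (Sym2 V)) (m : ℕ) : ℝ :=
  (∑ e ∈ F ∩ cyclePrefix v m, (1 - x e)) + ∑ e ∈ cyclePrefix v m \ F, x e

lemma cyclePrefix_mono [DecidableEq V] (v : ℕ → V) {m n : ℕ} (h : m ≤ n) :
    cyclePrefix v m ⊆ cyclePrefix v n :=
  Finset.image_subset_image (Finset.Icc_subset_Icc_right (Nat.sub_le_sub_right h 1))

/-- Correctness of the prefix-sum chord check: given a simple cycle
`C = {{v_1,v_2},…,{v_{k−1},v_k}}` with `v_k = v_1`, a subset `F ⊆ C`, and a chord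
`{v_j,v_i}` with `2 ≤ j < i ≤ k−1` such that `f(i) − f(j)` is even, the set
`F' = (F ∩ (P_i∖P_j)) ∪ {{v_j,v_i}}` is odd and the left-hand side of the cycle
inequality of `C' = (P_i∖P_j) ∪ {{v_j,v_i}}` with `F'` equals
`q(i) − q(j) + 1 − x({v_j,v_i})`; in particular it is violated iff
`q(i) − q(j) + 1 − x({v_j,v_i}) < 1`. -/
theorem stmt14 [Fintype V] [DecidableEq V] (G : SimpleGraph V) (x : Sym2 V → ℝ)
    (hx : ∀ e ∈ G.edgeSet, 0 ≤ x e ∧ x e ≤ 1)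
    (k : ℕ) (v : ℕ → V) (hk : 3 ≤ k) (hclosed : v k = v 1)
    (hadj : ∀ i, 1 ≤ i → i ≤ k - 1 → G.Adj (v i) (v (i + 1)))
    (hinj : ∀ i j, 1 ≤ i → i ≤ k - 1 → 1 ≤ j → j ≤ k - 1 → v i = v j → i = j)
    (F : Finset (Sym2 V)) (hF : F ⊆ cyclePrefix v k)
    (i j : ℕ) (hj : 2 ≤ j) (hji : j < i) (hik : i ≤ k - 1)
    (hchordE : s(v j, v i) ∈ G.edgeSet) (hchordC : s(v j, v i) ∉ cyclePrefix v k)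
    (hparity : Even (((F ∩ cyclePrefix v i).card : ℤ) - ((F ∩ cyclePrefix v j).card : ℤ))) :
    Odd ((F ∩ (cyclePrefix v i \ cyclePrefix v j) ∪ {s(v j, v i)}).card) ∧
    ((∑ e ∈ F ∩ (cyclePrefix v i \ cyclePrefix v j) ∪ {s(v j, v i)}, (1 - x e)) +
        ∑ e ∈ ((cyclePrefix v i \ cyclePrefix v j) ∪ {s(v j, v i)}) \
            (F ∩ (cyclePrefix v i \ cyclePrefix v j) ∪ {s(v j, v i)}), x e) =
      prefQ x v F i - prefQ x v F j + 1 - x s(v j, v i) ∧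
    (((∑ e ∈ F ∩ (cyclePrefix v i \ cyclePrefix v j) ∪ {s(v j, v i)}, (1 - x e)) +
        ∑ e ∈ ((cyclePrefix v i \ cyclePrefix v j) ∪ {s(v j, v i)}) \
            (F ∩ (cyclePrefix v i \ cyclePrefix v j) ∪ {s(v j, v i)}), x e) < 1 ↔
      prefQ x v F i - prefQ x v F j + 1 - x s(v j, v i) < 1) := by
  set c := s(v j, v i) with hc
  set Pi := cyclePrefix v i with hPi
  set Pj := cyclePrefix v j with hPj
  set D := Pi \ Pj with hD
  set A := F ∩ D with hA
  have hPji : Pj ⊆ Pi := cyclePrefix_mono v hji.le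
  have hPik : Pi ⊆ cyclePrefix v k := cyclePrefix_mono v (le_trans hik (Nat.sub_le k 1))
  have hcD : c ∉ D := fun h => hchordC (hPik ((Finset.sdiff_subset) h))
  have hcA : c ∉ A := fun h => hcD (Finset.mem_inter.mp h).2
  have hdisA : Disjoint A {c} := Finset.disjoint_singleton_right.mpr hcA
  have hdisD : Disjoint D {c} := Finset.disjoint_singleton_right.mpr hcD
  have hAeq : A = (F ∩ Pi) \ (F ∩ Pj) := by
    ext e; simp only [hA, hD, Finset.mem_inter, Finset.mem_sdiff]; tauto
  have hsub : F ∩ Pj ⊆ F ∩ Pi := Finset.inter_subset_inter le_rfl hPji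
  have hcardA : A.card = (F ∩ Pi).card - (F ∩ Pj).card := by
    rw [hAeq, Finset.card_sdiff_of_subset hsub]
  have hcardA' : (A.card : ℤ) = ((F ∩ Pi).card : ℤ) - ((F ∩ Pj).card : ℤ) := by
    rw [hcardA]
    exact_mod_cast Int.ofNat_sub (Finset.card_le_card hsub)
  have hevenA : Even A.card := by
    have : Even ((A.card : ℤ)) := hcardA' ▸ hparity
    exact_mod_cast this
  have hC'F' : (D ∪ {c}) \ (A ∪ {c}) = D \ F := by
    ext e
    simp only [Finset.mem_sdiff, Finset.mem_union, Finset.mem_singleton, hA,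
      Finset.mem_inter, not_or, not_and]
    constructor
    · rintro ⟨h1 | rfl, h2, h3⟩
      · exact ⟨h1, fun hf => (h2 hf h1)⟩
      · exact absurd rfl h3
    · rintro ⟨h1, h2⟩
      exact ⟨Or.inl h1, fun hf _ => h2 hf, fun he => hcD (he ▸ h1)⟩
  have hsum1 : (∑ e ∈ A ∪ {c}, (1 - x e)) = (∑ e ∈ A, (1 - x e)) + (1 - x c) := by
    rw [Finset.sum_union hdisA, Finset.sum_singleton]
  have hsubP : Pj \ F ⊆ Pi \ F := Finset.sdiff_subset_sdiff hPji le_rfl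
  have hPdiff : (Pi \ F) \ (Pj \ F) = D \ F := by
    ext e
    simp only [hD, Finset.mem_sdiff, not_and, not_not]
    constructor
    · rintro ⟨⟨h1, h2⟩, h3⟩
      exact ⟨⟨h1, fun hp => h2 (h3 hp)⟩, h2⟩
    · rintro ⟨⟨h1, h2⟩, h3⟩
      exact ⟨⟨h1, h3⟩, fun hp => absurd hp h2⟩
  have hq : prefQ x v F i - prefQ x v F j
      = (∑ e ∈ A, (1 - x e)) + ∑ e ∈ D \ F, x e := by
    have e1 : (∑ e ∈ A, (1 - x e))
        = (∑ e ∈ F ∩ Pi, (1 - x e)) - ∑ e ∈ F ∩ Pj, (1 - x e) := by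
      rw [hAeq]; exact Finset.sum_sdiff_eq_sub hsub
    have e2 : (∑ e ∈ D \ F, x e)
        = (∑ e ∈ Pi \ F, x e) - ∑ e ∈ Pj \ F, x e := by
      rw [← hPdiff]; exact Finset.sum_sdiff_eq_sub hsubP
    simp only [prefQ, ← hPi, ← hPj]
    rw [e1, e2]; ring
  have hmain : ((∑ e ∈ A ∪ {c}, (1 - x e)) + ∑ e ∈ (D ∪ {c}) \ (A ∪ {c}), x e)
      = prefQ x v F i - prefQ x v F j + 1 - x c := by
    rw [hsum1, hC'F', hq]; ring
  refine ⟨?_, hmain, by rw [hmain]⟩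
  rw [Finset.card_union_of_disjoint hdisA, Finset.card_singleton]
  exact Even.add_one hevenA
end

section
/- (QUBO to maximum cut) For every n∈ℕ and every matrix Q∈ℚ^{n×n}, there exist a constant c∈ℚ and edge weights w on the complete graph K with vertex set {0,1,…,n} such that for every x∈{0,1}^n: x^T Q x = c − w(δ({i∈{1,…,n} : x_i = 1})), where δ is the edge cut in K. Consequently, min_{x∈{0,1}^n} x^T Q x = c − max_{S⊆{1,…,n}} w(δ(S)), and the latter maximum equals the maximum cut weight of (K,w). -/
/-!
Adjoin a coordinate `y₀ = 0` to `y`. For a `{0,1}`-vector, `(y_u - y_v)²` is the indicator that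
the edge `uv` crosses the cut with shore `{u : y_u = 1}`, so
`2 w(δ(U)) = ∑_{u,v} (y_u - y_v)² w_uv`. For a symmetric `S` with row sums `r`,
`∑_{i,j} (y_i - y_j)² S_ij = 2 ∑_i y_i² r_i - 2 yᵀ S y`; giving the edge `{0, i}` the weight
`-r_i` cancels the first term, so with `S` the symmetric part of `Q` the cut weight is exactly
`-yᵀ Q y` (an identity for every `y`, not only for `{0,1}`-vectors). The statements on optima
follow since `x ↦ {i : x_i = 1}` is a bijection onto the vertex sets avoiding `0`, and
complementing a shore does not change the cut.
-/

variable {V : Type*}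

/-- The QUBO objective `x^T Q x` for a `{0,1}`-vector encoded as `x : Fin n → Bool`. -/
def quboVal (n : ℕ) (Q : Matrix (Fin n) (Fin n) ℚ) (x : Fin n → Bool) : ℚ :=
  ∑ i, ∑ j, (if x i then (1 : ℚ) else 0) * Q i j * (if x j then (1 : ℚ) else 0)

open Finset Matrix

theorem Sym2.two_nsmul_sum_lift {M : Type*} [Fintype V] [AddCommMonoid M] [DecidableEq V]
    (f : V → V → M) (hf : ∀ u v, f u v = f v u) (hdiag : ∀ v, f v v = 0) :
    2 • ∑ e : Sym2 V, Sym2.lift ⟨f, hf⟩ e = ∑ u, ∑ v, f u v := by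
  rw [← Fintype.sum_prod_type', ← sum_fiberwise univ (fun p : V × V => s(p.1, p.2)), smul_sum]
  refine sum_congr rfl fun e _ => ?_
  induction e using Sym2.ind with
  | h a b =>
    by_cases hab : a = b
    · subst hab
      have hfib : ({p ∈ univ | s(p.1, p.2) = s(a, a)} : Finset (V × V)) = {(a, a)} := by
        ext ⟨u, v⟩; simp
      rw [hfib, sum_singleton]
      simp [hdiag]
    · have hfib : ({p ∈ univ | s(p.1, p.2) = s(a, b)} : Finset (V × V)) = {(a, b), (b, a)} := by
        ext ⟨u, v⟩; simp
      rw [hfib, sum_pair (by simp [hab]), Sym2.lift_mk, hf b a, two_nsmul]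

theorem inCutSet_top_mk_iff (U : Set V) (u v : V) :
    inCutSet ⊤ U s(u, v) ↔ ¬(u ∈ U ↔ v ∈ U) := by
  by_cases hu : u ∈ U <;> by_cases hv : v ∈ U <;> simp [inCutSet, hu, hv] <;>
    rintro rfl <;> contradiction

theorem two_mul_cutWeight_top_lift [Fintype V] [DecidableEq V] (f : V → V → ℚ)
    (hf : ∀ u v, f u v = f v u) (U : Set V) :
    2 * cutWeight ⊤ (Sym2.lift ⟨f, hf⟩) U =
      ∑ u, ∑ v, (U.indicator 1 u - U.indicator 1 v) ^ 2 * f u v := by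
  classical
  have hcross (u v : V) : (U.indicator 1 u - U.indicator 1 v : ℚ) ^ 2 =
      if inCutSet ⊤ U s(u, v) then 1 else 0 := by
    rw [inCutSet_top_mk_iff]
    by_cases hu : u ∈ U <;> by_cases hv : v ∈ U <;> simp [hu, hv]
  rw [← Sym2.two_nsmul_sum_lift _ (fun u v => by rw [hf, ← neg_sub, neg_sq]) (by simp),
    nsmul_eq_mul, Nat.cast_ofNat, cutWeight, cutFinset, sum_filter]
  congr 1
  refine sum_congr rfl fun e _ => ?_
  induction e using Sym2.ind with
  | h u v => simp [hcross]

theorem inCutSet_compl (G : SimpleGraph V) (U : Set V) (e : Sym2 V) :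
    inCutSet G Uᶜ e ↔ inCutSet G U e := by
  simp only [inCutSet, Set.mem_compl_iff, not_not]
  tauto

theorem cutWeight_compl [Fintype V] (G : SimpleGraph V) (w : Sym2 V → ℚ) (U : Set V) :
    cutWeight G w Uᶜ = cutWeight G w U := by
  classical
  simp only [cutWeight, cutFinset]
  congr 1
  exact filter_congr fun e _ => inCutSet_compl G U e

theorem setOf_cutWeight_subset_ne_eq [Fintype V] (G : SimpleGraph V) (w : Sym2 V → ℚ) (v : V) :
    {q | ∃ S : Set V, S ⊆ {p | p ≠ v} ∧ q = cutWeight G w S} =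
      {q | ∃ S, q = cutWeight G w S} := by
  ext q
  constructor
  · rintro ⟨S, -, rfl⟩
    exact ⟨S, rfl⟩
  · rintro ⟨S, rfl⟩
    by_cases hv : v ∈ S
    · exact ⟨Sᶜ, fun p hp hpv => hp (hpv ▸ hv), (cutWeight_compl G w S).symm⟩
    · exact ⟨S, fun p hp hpv => hv (hpv ▸ hp), rfl⟩

theorem Matrix.IsSymm.sum_sum_sub_sq_mul {ι R : Type*} [Fintype ι] [CommRing R]
    {S : Matrix ι ι R} (hS : S.IsSymm) (y : ι → R) :
    ∑ i, ∑ j, (y i - y j) ^ 2 * S i j =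
      2 * ∑ i, y i ^ 2 * ∑ j, S i j - 2 * (y ⬝ᵥ S *ᵥ y) := by
  have hcol : ∑ i, ∑ j, y j ^ 2 * S i j = ∑ i, y i ^ 2 * ∑ j, S i j := by
    rw [sum_comm]
    simp_rw [mul_sum, hS.apply]
  calc ∑ i, ∑ j, (y i - y j) ^ 2 * S i j
      = ∑ i, y i ^ 2 * ∑ j, S i j + ∑ i, ∑ j, y j ^ 2 * S i j
          - 2 * ∑ i, y i * ∑ j, S i j * y j := by
        simp only [mul_sum, ← sum_add_distrib, ← sum_sub_distrib]
        exact sum_congr rfl fun i _ => sum_congr rfl fun j _ => by ring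
    _ = _ := by
        rw [hcol]
        simp only [dotProduct, mulVec]
        ring

section QUBO

variable {K : Type*} [Field K] {n : ℕ}

def symmPart (Q : Matrix (Fin n) (Fin n) K) : Matrix (Fin n) (Fin n) K :=
  (2⁻¹ : K) • (Q + Qᵀ)

theorem symmPart_isSymm (Q : Matrix (Fin n) (Fin n) K) : (symmPart Q).IsSymm := by
  simp [symmPart, IsSymm, transpose_smul, add_comm]

theorem dotProduct_symmPart_mulVec [NeZero (2 : K)] (Q : Matrix (Fin n) (Fin n) K)
    (y : Fin n → K) :
    y ⬝ᵥ symmPart Q *ᵥ y = y ⬝ᵥ Q *ᵥ y := by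
  rw [symmPart, smul_mulVec, add_mulVec, dotProduct_smul, dotProduct_add,
    dotProduct_transpose_mulVec, ← two_mul, smul_eq_mul, ← mul_assoc,
    inv_mul_cancel₀ two_ne_zero, one_mul]

def quboWeights (Q : Matrix (Fin n) (Fin n) K) : Fin (n + 1) → Fin (n + 1) → K :=
  let r := fun i => ∑ j, symmPart Q i j
  vecCons (vecCons 0 (-r)) fun i => vecCons (-r i) (symmPart Q i)

theorem quboWeights_comm (Q : Matrix (Fin n) (Fin n) K) (u v : Fin (n + 1)) :
    quboWeights Q u v = quboWeights Q v u := by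
  cases u using Fin.cases <;> cases v using Fin.cases <;>
    simp [quboWeights, (symmPart_isSymm Q).apply]

theorem sum_sum_sub_sq_mul_quboWeights [NeZero (2 : K)] (Q : Matrix (Fin n) (Fin n) K)
    (y : Fin n → K) :
    ∑ u, ∑ v, (vecCons 0 y u - vecCons 0 y v) ^ 2 * quboWeights Q u v =
      -2 * (y ⬝ᵥ Q *ᵥ y) := by
  simp only [Fin.sum_univ_succ, cons_val_zero, cons_val_succ, quboWeights, sum_add_distrib,
    (symmPart_isSymm Q).sum_sum_sub_sq_mul, dotProduct_symmPart_mulVec]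
  simp only [Pi.neg_apply, mul_neg, sum_neg_distrib, zero_sub, neg_sq, sub_zero]
  ring

def cutShore (x : Fin n → Bool) : Set (Fin (n + 1)) :=
  {p | ∃ i, x i = true ∧ p = i.succ}

theorem cutShore_subset (x : Fin n → Bool) : cutShore x ⊆ {p | p ≠ 0} := by
  rintro p ⟨i, -, rfl⟩
  exact Fin.succ_ne_zero i

theorem exists_cutShore_eq {S : Set (Fin (n + 1))} (hS : S ⊆ {p | p ≠ 0}) :
    ∃ x : Fin n → Bool, cutShore x = S := by
  classical
  refine ⟨fun i => decide (i.succ ∈ S), Set.ext fun p => ?_⟩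
  cases p using Fin.cases with
  | zero => simpa [cutShore, (Fin.succ_ne_zero _).symm] using fun h => hS h rfl
  | succ i => simp [cutShore]

theorem indicator_cutShore (x : Fin n → Bool) :
    (cutShore x).indicator 1 = vecCons (0 : ℚ) fun i => if x i then 1 else 0 := by
  funext p
  cases p using Fin.cases with
  | zero => simp [cutShore, (Fin.succ_ne_zero _).symm]
  | succ i => by_cases hi : x i <;> simp [cutShore, hi]

theorem quboVal_eq_dotProduct (Q : Matrix (Fin n) (Fin n) ℚ) (x : Fin n → Bool) :
    quboVal n Q x =
      (fun i => if x i then 1 else 0) ⬝ᵥ Q *ᵥ fun i => if x i then 1 else 0 := by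
  simp only [quboVal, dotProduct, mulVec, mul_sum, mul_assoc]

noncomputable def quboCutWeights (Q : Matrix (Fin n) (Fin n) ℚ) : Sym2 (Fin (n + 1)) → ℚ :=
  Sym2.lift ⟨quboWeights Q, quboWeights_comm Q⟩

theorem quboVal_eq_neg_cutWeight (Q : Matrix (Fin n) (Fin n) ℚ) (x : Fin n → Bool) :
    quboVal n Q x = -cutWeight ⊤ (quboCutWeights Q) (cutShore x) := by
  have h := two_mul_cutWeight_top_lift (quboWeights Q) (quboWeights_comm Q) (cutShore x)
  rw [indicator_cutShore, sum_sum_sub_sq_mul_quboWeights, ← quboVal_eq_dotProduct] at h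
  rw [quboCutWeights]
  linarith

theorem setOf_quboVal_eq_image (Q : Matrix (Fin n) (Fin n) ℚ) :
    {q | ∃ x, q = quboVal n Q x} =
      Neg.neg '' {q | ∃ S, S ⊆ {p | p ≠ 0} ∧ q = cutWeight ⊤ (quboCutWeights Q) S} := by
  ext q
  constructor
  · rintro ⟨x, rfl⟩
    exact ⟨_, ⟨cutShore x, cutShore_subset x, rfl⟩, (quboVal_eq_neg_cutWeight Q x).symm⟩
  · rintro ⟨_, ⟨S, hS, rfl⟩, rfl⟩
    obtain ⟨x, rfl⟩ := exists_cutShore_eq hS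
    exact ⟨x, (quboVal_eq_neg_cutWeight Q x).symm⟩

end QUBO

/-- QUBO to maximum cut: for every `Q ∈ ℚ^{n×n}` there are a constant `c` and edge
weights `w` on the complete graph `K` on `{0,1,…,n}` such that
`x^T Q x = c − w(δ({i : x_i = 1}))` for all `x ∈ {0,1}^n`; consequently
`min x^T Q x = c − max_{S ⊆ {1,…,n}} w(δ(S))`, and that maximum equals the maximum
cut weight of `(K,w)`. Vertex `0 : Fin (n+1)` is the extra vertex and vertex `i.succ`
corresponds to the variable `x_i`. -/
theorem stmt16 (n : ℕ) (Q : Matrix (Fin n) (Fin n) ℚ) :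
    ∃ (c : ℚ) (w : Sym2 (Fin (n + 1)) → ℚ),
      (∀ x : Fin n → Bool,
        quboVal n Q x =
          c - cutWeight (⊤ : SimpleGraph (Fin (n + 1))) w
                {p : Fin (n + 1) | ∃ i : Fin n, x i = true ∧ p = i.succ}) ∧
      (∀ mq mc : ℚ,
        IsLeast {q | ∃ x : Fin n → Bool, q = quboVal n Q x} mq →
        IsGreatest {q | ∃ S : Set (Fin (n + 1)), S ⊆ {p | p ≠ 0} ∧
            q = cutWeight (⊤ : SimpleGraph (Fin (n + 1))) w S} mc →
        mq = c - mc) ∧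
      (∀ mc mk : ℚ,
        IsGreatest {q | ∃ S : Set (Fin (n + 1)), S ⊆ {p | p ≠ 0} ∧
            q = cutWeight (⊤ : SimpleGraph (Fin (n + 1))) w S} mc →
        IsGreatest {q | ∃ S : Set (Fin (n + 1)),
            q = cutWeight (⊤ : SimpleGraph (Fin (n + 1))) w S} mk →
        mc = mk) := by
  refine ⟨0, quboCutWeights Q, fun x => ?_, ?_, ?_⟩
  · rw [zero_sub]
    exact quboVal_eq_neg_cutWeight Q x
  · intro mq mc hmq hmc
    rw [setOf_quboVal_eq_image] at hmq
    rw [zero_sub]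
    exact hmq.unique (Antitone.map_isGreatest (fun _ _ h => neg_le_neg h) hmc)
  · intro mc mk hmc hmk
    rw [setOf_cutWeight_subset_ne_eq] at hmc
    exact hmc.unique hmk
end
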